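/- arXiv:2001.08127 — 12 statements merged into one kernel-verified Lean document; each statement's English description precedes it below -/
import Mathlib

section
/- Let R be the right-shift operator on ℓ²(ℤ) defined by R eₙ = eₙ₊₁ on the canonical orthonormal basis. Then the unique solution f = e₀ to Rf = e₁ does not belong to the closure of the Krylov subspace K(R, e₁), since that closure equals the closed span of {e₁, e₂, e₃, ...}. -/
/-!
Every Krylov vector `Rᵏ e₁ = e_{k+1}` is orthogonal to `e₀`, so the closure of the Krylov
subspace lies in the closed hyperplane `e₀ᗮ`, which does not contain `e₀`.
-/

open Submodule

theorem ContinuousLinearMap.pow_apply_of_map_succ {R M : Type*} [Semiring R]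
    [TopologicalSpace M] [AddCommMonoid M] [Module R M] (f : M →L[R] M) {v : ℤ → M}
    (hf : ∀ n, f (v n) = v (n + 1)) (m : ℤ) (k : ℕ) : (f ^ k) (v m) = v (m + k) := by
  induction k with
  | zero => simp
  | succ k ih =>
    rw [pow_succ', ContinuousLinearMap.mul_def, ContinuousLinearMap.comp_apply, ih, hf]
    push_cast
    ring_nf

theorem notMem_closure_span_of_inner_eq_zero {𝕜 E : Type*} [RCLike 𝕜] [NormedAddCommGroup E]
    [InnerProductSpace 𝕜 E] {x : E} {s : Set E} (hx : x ≠ 0) (hs : ∀ y ∈ s, inner 𝕜 x y = 0) :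
    x ∉ closure (span 𝕜 s : Set E) := by
  have hle : closure (span 𝕜 s : Set E) ⊆ (𝕜 ∙ x)ᗮ :=
    closure_minimal (span_le.2 fun y hy => mem_orthogonal_singleton_iff_inner_right.2 (hs y hy))
      (isClosed_orthogonal _)
  intro hmem
  exact hx (inner_self_eq_zero.1 (mem_orthogonal_singleton_iff_inner_right.1 (hle hmem)))

theorem lp.inner_single_single_of_ne {ι : Type*} [DecidableEq ι] {i j : ι} (hij : i ≠ j) (a b : ℂ) :
    inner ℂ (lp.single 2 i a) (lp.single 2 j b : lp (fun _ : ι => ℂ) 2) = 0 := by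
  rw [lp.inner_single_left, lp.single_apply_ne 2 j _ hij, inner_zero_right]

/-- For the right shift `R` on `ℓ²(ℤ)`, the closure of the Krylov subspace `K(R, e₁)`
equals the closed span of `{e₁, e₂, …}`, and the (unique) solution `e₀` of `Rf = e₁`
does not belong to it. -/
theorem stmt1
    (R : lp (fun _ : ℤ => ℂ) 2 →L[ℂ] lp (fun _ : ℤ => ℂ) 2)
    (hR : ∀ n : ℤ, R (lp.single 2 n 1) = lp.single 2 (n + 1) 1) :
    R (lp.single 2 (0 : ℤ) 1) = lp.single 2 (1 : ℤ) 1
    ∧ closure ((Submodule.span ℂ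
          (Set.range fun k : ℕ => (R ^ k) (lp.single 2 (1 : ℤ) 1))) : Set (lp (fun _ : ℤ => ℂ) 2))
        = closure ((Submodule.span ℂ
          (Set.range fun n : ℕ => (lp.single 2 ((n : ℤ) + 1) 1 : lp (fun _ : ℤ => ℂ) 2)))
            : Set (lp (fun _ : ℤ => ℂ) 2))
    ∧ lp.single 2 (0 : ℤ) 1 ∉ closure ((Submodule.span ℂ
          (Set.range fun k : ℕ => (R ^ k) (lp.single 2 (1 : ℤ) 1))) : Set (lp (fun _ : ℤ => ℂ) 2)) := by
  have krylov : (fun k : ℕ => (R ^ k) (lp.single 2 (1 : ℤ) 1))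
      = fun n : ℕ => (lp.single 2 ((n : ℤ) + 1) 1 : lp (fun _ : ℤ => ℂ) 2) := by
    funext k
    rw [R.pow_apply_of_map_succ (v := fun n => lp.single 2 n 1) hR, add_comm]
  refine ⟨hR 0, by rw [krylov], ?_⟩
  rw [krylov]
  refine notMem_closure_span_of_inner_eq_zero ?_ ?_
  · rw [← norm_ne_zero_iff, lp.norm_single (by norm_num)]
    exact norm_ne_zero_iff.2 one_ne_zero
  rintro _ ⟨n, rfl⟩
  exact lp.inner_single_single_of_ne (by omega) 1 1
end

section
/- Let L be the left-shift operator on ℓ²(ℕ₀) with L e₀ = 0 and L eₙ₊₁ = eₙ, and let g = Σ_{n≥0} (1/n!) eₙ. Then the Krylov subspace K(L,g) = span{Lᵏg : k ∈ ℕ₀} is dense in ℓ²(ℕ₀). -/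
/-!
Since `L` shifts coefficients, `Lᵏ g = ∑ₙ eₙ / (n + k)!`. If `e₀, …, e_{m-1}` already lie in the
closure of the Krylov subspace, subtracting them from `Lᵏ g` and rescaling by `(k + m)!` leaves
`eₘ` plus a tail of norm `O(1 / (k + m))`, since `(k + m)! / (k + m + n + 1)! ≤ (k + m + 1)^-(n+1)`.
Letting `k → ∞` puts every `eₘ` in that closure, and the `eₘ` span a dense subspace.
-/

open Filter Topology Submodule Nat Finset

theorem factorial_div_factorial_add_succ_le (N n : ℕ) :
    (N ! : ℝ) / (N + n + 1)! ≤ (N + 1 : ℝ)⁻¹ ^ (n + 1) := by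
  have h : N ! * (N + 1) ^ (n + 1) ≤ (N + (n + 1))! := factorial_mul_pow_le_factorial
  rw [div_le_iff₀ (by positivity), inv_pow, ← div_eq_inv_mul, le_div_iff₀ (by positivity)]
  exact_mod_cast h

theorem hasSum_inv_succ_pow_succ {N : ℕ} (hN : 1 ≤ N) :
    HasSum (fun n : ℕ => (N + 1 : ℝ)⁻¹ ^ (n + 1)) (N : ℝ)⁻¹ := by
  have hr : (N + 1 : ℝ)⁻¹ < 1 := inv_lt_one_of_one_lt₀ (by norm_cast; omega)
  have hN' : (N : ℝ) ≠ 0 := by norm_cast; omega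
  have hsub : 1 - (N + 1 : ℝ)⁻¹ = N / (N + 1) := by field_simp; ring
  have hval : (N + 1 : ℝ)⁻¹ * (1 - (N + 1 : ℝ)⁻¹)⁻¹ = (N : ℝ)⁻¹ := by
    rw [hsub, inv_div]
    field_simp
  have h := (hasSum_geometric_of_lt_one (by positivity) hr).mul_left (N + 1 : ℝ)⁻¹
  rw [hval] at h
  simpa only [← _root_.pow_succ'] using h

section ShiftOperator

variable {𝕜 E : Type*} [RCLike 𝕜] [NormedAddCommGroup E] [NormedSpace 𝕜 E]
  (L : E →L[𝕜] E) {e : ℕ → E}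

theorem hasSum_apply_of_shift (hL0 : L (e 0) = 0) (hL : ∀ n, L (e (n + 1)) = e n)
    {c : ℕ → 𝕜} {x : E} (hx : HasSum (fun n => c n • e n) x) :
    HasSum (fun n => c (n + 1) • e n) (L x) := by
  simpa [hL0, hL] using (hasSum_nat_add_iff' 1).mpr (L.hasSum hx)

theorem hasSum_pow_apply_of_shift (hL0 : L (e 0) = 0) (hL : ∀ n, L (e (n + 1)) = e n)
    {c : ℕ → 𝕜} {x : E} (hx : HasSum (fun n => c n • e n) x) (k : ℕ) :
    HasSum (fun n => c (n + k) • e n) ((L ^ k) x) := by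
  induction k with
  | zero => simpa using hx
  | succ k ih =>
    rw [_root_.pow_succ', mul_apply_eq_comp]
    simpa only [← add_assoc, Nat.add_right_comm _ 1 k] using hasSum_apply_of_shift L hL0 hL ih

theorem hasSum_factorial_smul_pow_apply_sub_sum (hL0 : L (e 0) = 0)
    (hL : ∀ n, L (e (n + 1)) = e n) {g : E} (hg : HasSum (fun n => ((n ! : 𝕜))⁻¹ • e n) g)
    (m k : ℕ) :
    HasSum (fun n => (((k + m)! : 𝕜) / (k + m + n + 1)!) • e (n + (m + 1)))
      (((k + m)! : 𝕜) • ((L ^ k) g - ∑ j ∈ range m, (((j + k)! : 𝕜))⁻¹ • e j) - e m) := by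
  have h := ((hasSum_nat_add_iff' (m + 1)).mpr
    (hasSum_pow_apply_of_shift L hL0 hL hg k)).const_smul ((k + m)! : 𝕜)
  rw [sum_range_succ, sub_add_eq_sub_sub, smul_sub _ (_ - _), smul_smul,
    add_comm m k, mul_inv_cancel₀ (cast_ne_zero.mpr (factorial_ne_zero _)), one_smul] at h
  convert h using 2 with n
  rw [smul_smul, div_eq_mul_inv, show n + (m + 1) + k = k + m + n + 1 by omega]

theorem tendsto_factorial_smul_pow_apply_sub_sum {C : ℝ} (he : ∀ n, ‖e n‖ ≤ C)
    (hL0 : L (e 0) = 0) (hL : ∀ n, L (e (n + 1)) = e n) {g : E}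
    (hg : HasSum (fun n => ((n ! : 𝕜))⁻¹ • e n) g) (m : ℕ) :
    Tendsto (fun k => ((k + m)! : 𝕜) • ((L ^ k) g - ∑ j ∈ range m, (((j + k)! : 𝕜))⁻¹ • e j))
      atTop (𝓝 (e m)) := by
  have hC : 0 ≤ C := (norm_nonneg _).trans (he 0)
  have hbound : ∀ k, 1 ≤ k →
      ‖((k + m)! : 𝕜) • ((L ^ k) g - ∑ j ∈ range m, (((j + k)! : 𝕜))⁻¹ • e j) - e m‖
        ≤ C * ((k + m : ℕ) : ℝ)⁻¹ := fun k hk =>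
    (hasSum_factorial_smul_pow_apply_sub_sum L hL0 hL hg m k).norm_le_of_bounded
      ((hasSum_inv_succ_pow_succ (by omega)).mul_left C) fun n => by
        rw [norm_smul, norm_div, RCLike.norm_natCast, RCLike.norm_natCast, mul_comm]
        exact mul_le_mul (he _) (factorial_div_factorial_add_succ_le _ n) (by positivity) hC
  have hlim : Tendsto (fun k : ℕ => C * ((k + m : ℕ) : ℝ)⁻¹) atTop (𝓝 0) := by
    simpa using (tendsto_inv_atTop_zero.comp
      (tendsto_natCast_atTop_atTop.comp (tendsto_add_atTop_nat m))).const_mul C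
  exact tendsto_iff_norm_sub_tendsto_zero.mpr <| squeeze_zero' (.of_forall fun _ => norm_nonneg _)
    ((eventually_ge_atTop 1).mono hbound) hlim

theorem mem_topologicalClosure_span_pow_apply {C : ℝ} (he : ∀ n, ‖e n‖ ≤ C)
    (hL0 : L (e 0) = 0) (hL : ∀ n, L (e (n + 1)) = e n) {g : E}
    (hg : HasSum (fun n => ((n ! : 𝕜))⁻¹ • e n) g) (m : ℕ) :
    e m ∈ (span 𝕜 (Set.range fun k => (L ^ k) g)).topologicalClosure := by
  set S := span 𝕜 (Set.range fun k => (L ^ k) g)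
  induction m using Nat.strong_induction_on with
  | _ m ih =>
    refine S.isClosed_topologicalClosure.mem_of_tendsto
      (tendsto_factorial_smul_pow_apply_sub_sum L he hL0 hL hg m) (.of_forall fun k => ?_)
    refine smul_mem _ _ (sub_mem (le_topologicalClosure _ (subset_span ⟨k, rfl⟩)) ?_)
    exact sum_mem fun j hj => smul_mem _ _ (ih j (mem_range.mp hj))

theorem dense_span_pow_apply_of_shift (hdense : Dense (span 𝕜 (Set.range e) : Set E))
    {C : ℝ} (he : ∀ n, ‖e n‖ ≤ C) (hL0 : L (e 0) = 0) (hL : ∀ n, L (e (n + 1)) = e n)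
    {g : E} (hg : HasSum (fun n => ((n ! : 𝕜))⁻¹ • e n) g) :
    Dense (span 𝕜 (Set.range fun k => (L ^ k) g) : Set E) := by
  rw [dense_iff_topologicalClosure_eq_top, eq_top_iff] at hdense ⊢
  refine hdense.trans (topologicalClosure_minimal _ ?_ (isClosed_topologicalClosure _))
  exact span_le.mpr <|
    Set.range_subset_iff.mpr (mem_topologicalClosure_span_pow_apply L he hL0 hL hg)

end ShiftOperator

/-- For the left shift `L` on `ℓ²(ℕ₀)` and `g = Σₙ (1/n!) eₙ`, the Krylov subspace
`K(L, g) = span{Lᵏg : k ∈ ℕ₀}` is dense in `ℓ²(ℕ₀)`. -/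
theorem stmt2
    (L : lp (fun _ : ℕ => ℂ) 2 →L[ℂ] lp (fun _ : ℕ => ℂ) 2)
    (hL0 : L (lp.single 2 (0 : ℕ) 1) = 0)
    (hL : ∀ n : ℕ, L (lp.single 2 (n + 1) 1) = lp.single 2 n 1)
    (g : lp (fun _ : ℕ => ℂ) 2)
    (hg : g = ∑' n : ℕ, ((n.factorial : ℂ))⁻¹ • (lp.single 2 n 1 : lp (fun _ : ℕ => ℂ) 2)) :
    Dense ((Submodule.span ℂ (Set.range fun k : ℕ => (L ^ k) g)) : Set (lp (fun _ : ℕ => ℂ) 2)) := by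
  classical
  let b : HilbertBasis ℕ ℂ (lp (fun _ : ℕ => ℂ) 2) := .ofRepr (.refl ℂ _)
  have hb : ⇑b = fun n => lp.single 2 n 1 := funext fun n => (b.repr_symm_single n).symm
  have hnorm (n : ℕ) : ‖(lp.single 2 n 1 : lp (fun _ : ℕ => ℂ) 2)‖ = 1 := by
    simp [lp.norm_single]
  have hsum : Summable fun n : ℕ => ((n ! : ℂ))⁻¹ • (lp.single 2 n 1 : lp (fun _ : ℕ => ℂ) 2) :=
    .of_norm (by simpa [norm_smul, hnorm] using Real.summable_pow_div_factorial 1)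
  refine dense_span_pow_apply_of_shift L ?_ (fun n => (hnorm n).le) hL0 hL (hg ▸ hsum.hasSum)
  exact hb ▸ dense_iff_topologicalClosure_eq_top.mpr b.dense_span
end

section
/- Let H be a Hilbert space, A : H → H a bounded injective operator with cyclic vector g ∈ ran A, let f solve Af = g, and fix φ₀ ∈ H \ {0}. Define à = A ⊕ |φ₀⟩⟨φ₀| on H ⊕ H and g̃ = g ⊕ 0. Then f̃ = f ⊕ 0 is a solution to Ãf̃ = g̃ lying in the closure of K(Ã, g̃) = H ⊕ {0}, while for any nonzero ξ ⊥ φ₀ the vector f̃_ξ = f ⊕ ξ is also a solution but does not lie in the closure of K(Ã, g̃). -/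
/-!
On `H ⊕ {0}` the operator `Ã` acts as `A`, so the Krylov space of `g̃ = g ⊕ 0` is the image of
the Krylov space of `g` under `x ↦ x ⊕ 0`. Cyclicity of `g` makes its closure all of the closed
subspace `H ⊕ {0}`. Both `f ⊕ 0` and `f ⊕ ξ` with `ξ ⊥ φ₀` solve `Ãx = g̃`, since `|φ₀⟩⟨φ₀|`
kills `ξ`; only the first lies in `H ⊕ {0}`.
-/

open Set

section Krylov

variable {R E F : Type*} [Semiring R] [TopologicalSpace E] [AddCommMonoid E] [Module R E]
  [TopologicalSpace F] [AddCommMonoid F] [Module R F]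

def krylov (A : E →L[R] E) (g : E) : Submodule R E :=
  Submodule.span R (range fun k : ℕ => (A ^ k) g)

variable {A : E →L[R] E} {T : F →L[R] F} {ι : E →L[R] F}

theorem pow_comp_eq_comp_pow (hT : T ∘L ι = ι ∘L A) (k : ℕ) : (T ^ k) ∘L ι = ι ∘L A ^ k := by
  have hsemiconj : Function.Semiconj ι A T := fun x => (DFunLike.congr_fun hT x).symm
  ext x
  simpa [FunLike.coe_pow_eq_iterate] using (hsemiconj.iterate_right k x).symm

theorem krylov_comp_eq_map (hT : T ∘L ι = ι ∘L A) (g : E) :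
    krylov T (ι g) = (krylov A g).map (ι : E →ₗ[R] F) := by
  rw [krylov, krylov, Submodule.map_span, ← range_comp]
  congr 2
  funext k
  exact DFunLike.congr_fun (pow_comp_eq_comp_pow hT k) g

theorem closure_krylov_comp_eq_range (hT : T ∘L ι = ι ∘L A) {g : E}
    (hcyc : Dense (krylov A g : Set E)) (hclosed : IsClosed (range ι)) :
    closure (krylov T (ι g) : Set F) = range ι := by
  rw [krylov_comp_eq_map hT, Submodule.map_coe]
  refine subset_antisymm (closure_minimal (image_subset_range _ _) hclosed) ?_
  calc range ι = ι '' closure (krylov A g : Set E) := by rw [hcyc.closure_eq, image_univ]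
    _ ⊆ closure (ι '' (krylov A g : Set E)) := image_closure_subset_closure_image ι.continuous

end Krylov

theorem stmt4_general {H : Type*} [NormedAddCommGroup H] [InnerProductSpace ℂ H]
    (A : H →L[ℂ] H)
    (g f φ₀ : H)
    (hcyc : Dense ((Submodule.span ℂ (Set.range fun k : ℕ => (A ^ k) g)) : Set H))
    (hf : A f = g)
    (Atil : WithLp 2 (H × H) →L[ℂ] WithLp 2 (H × H))
    (hAtil : ∀ x y : H, Atil ((WithLp.equiv 2 (H × H)).symm (x, y))
        = (WithLp.equiv 2 (H × H)).symm (A x, (inner ℂ φ₀ y : ℂ) • φ₀)) :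
    closure ((Submodule.span ℂ (Set.range fun k : ℕ =>
          (Atil ^ k) ((WithLp.equiv 2 (H × H)).symm (g, 0)))) : Set (WithLp 2 (H × H)))
        = {p : WithLp 2 (H × H) | (WithLp.equiv 2 (H × H) p).2 = 0}
    ∧ Atil ((WithLp.equiv 2 (H × H)).symm (f, 0)) = (WithLp.equiv 2 (H × H)).symm (g, 0)
    ∧ (WithLp.equiv 2 (H × H)).symm (f, 0) ∈ closure ((Submodule.span ℂ (Set.range fun k : ℕ =>
          (Atil ^ k) ((WithLp.equiv 2 (H × H)).symm (g, 0)))) : Set (WithLp 2 (H × H)))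
    ∧ ∀ ξ : H, ξ ≠ 0 → (inner ℂ φ₀ ξ : ℂ) = 0 →
        Atil ((WithLp.equiv 2 (H × H)).symm (f, ξ)) = (WithLp.equiv 2 (H × H)).symm (g, 0)
        ∧ (WithLp.equiv 2 (H × H)).symm (f, ξ) ∉ closure ((Submodule.span ℂ (Set.range fun k : ℕ =>
            (Atil ^ k) ((WithLp.equiv 2 (H × H)).symm (g, 0)))) : Set (WithLp 2 (H × H))) := by
  let ι : H →L[ℂ] WithLp 2 (H × H) :=
    (WithLp.prodContinuousLinearEquiv 2 ℂ H H).symm.toContinuousLinearMap ∘L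
      ContinuousLinearMap.inl ℂ H H
  have hrange : range ι = {p : WithLp 2 (H × H) | (WithLp.equiv 2 (H × H) p).2 = 0} := by
    ext p
    refine ⟨by rintro ⟨x, rfl⟩; rfl, fun hp => ⟨(WithLp.equiv 2 (H × H) p).1, ?_⟩⟩
    change (WithLp.equiv 2 (H × H)).symm ((WithLp.equiv 2 (H × H) p).1, 0) = p
    rw [← (hp : (WithLp.equiv 2 (H × H) p).2 = 0), Prod.mk.eta, Equiv.symm_apply_apply]
  have hclosed : IsClosed (range ι) := by
    rw [hrange]
    exact isClosed_eq (continuous_snd.comp (WithLp.prod_continuous_ofLp 2 H H)) continuous_const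
  have hT : Atil ∘L ι = ι ∘L A := by
    ext x
    change Atil ((WithLp.equiv 2 (H × H)).symm (x, 0)) = (WithLp.equiv 2 (H × H)).symm (A x, 0)
    rw [hAtil, inner_zero_right, zero_smul]
  have hK := closure_krylov_comp_eq_range hT hcyc hclosed
  rw [hrange] at hK
  have hsol : ∀ ξ : H, (inner ℂ φ₀ ξ : ℂ) = 0 →
      Atil ((WithLp.equiv 2 (H × H)).symm (f, ξ)) = (WithLp.equiv 2 (H × H)).symm (g, 0) := by
    intro ξ hξ
    rw [hAtil, hf, hξ, zero_smul]
  exact ⟨hK, hsol 0 (inner_zero_right _), hK ▸ rfl,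
    fun ξ hξ hperp => ⟨hsol ξ hperp, hK ▸ hξ⟩⟩

/-- For a bounded injective `A` with cyclic vector `g ∈ ran A`, solution `f` of `Af = g`,
and `φ₀ ≠ 0`, the operator `Ã = A ⊕ |φ₀⟩⟨φ₀|` on `H ⊕ H` with datum `g̃ = g ⊕ 0` has
closure of `K(Ã, g̃)` equal to `H ⊕ {0}`; `f̃ = f ⊕ 0` is a Krylov solution, while for
any nonzero `ξ ⊥ φ₀` the solution `f̃_ξ = f ⊕ ξ` is not a Krylov solution. -/
theorem stmt4 {H : Type*} [NormedAddCommGroup H] [InnerProductSpace ℂ H] [CompleteSpace H]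
    (A : H →L[ℂ] H) (hinj : Function.Injective A)
    (g f φ₀ : H) (hφ₀ : φ₀ ≠ 0)
    (hg : g ∈ Set.range A)
    (hcyc : Dense ((Submodule.span ℂ (Set.range fun k : ℕ => (A ^ k) g)) : Set H))
    (hf : A f = g)
    (Atil : WithLp 2 (H × H) →L[ℂ] WithLp 2 (H × H))
    (hAtil : ∀ x y : H, Atil ((WithLp.equiv 2 (H × H)).symm (x, y))
        = (WithLp.equiv 2 (H × H)).symm (A x, (inner ℂ φ₀ y : ℂ) • φ₀)) :
    closure ((Submodule.span ℂ (Set.range fun k : ℕ =>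
          (Atil ^ k) ((WithLp.equiv 2 (H × H)).symm (g, 0)))) : Set (WithLp 2 (H × H)))
        = {p : WithLp 2 (H × H) | (WithLp.equiv 2 (H × H) p).2 = 0}
    ∧ Atil ((WithLp.equiv 2 (H × H)).symm (f, 0)) = (WithLp.equiv 2 (H × H)).symm (g, 0)
    ∧ (WithLp.equiv 2 (H × H)).symm (f, 0) ∈ closure ((Submodule.span ℂ (Set.range fun k : ℕ =>
          (Atil ^ k) ((WithLp.equiv 2 (H × H)).symm (g, 0)))) : Set (WithLp 2 (H × H)))
    ∧ ∀ ξ : H, ξ ≠ 0 → (inner ℂ φ₀ ξ : ℂ) = 0 →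
        Atil ((WithLp.equiv 2 (H × H)).symm (f, ξ)) = (WithLp.equiv 2 (H × H)).symm (g, 0)
        ∧ (WithLp.equiv 2 (H × H)).symm (f, ξ) ∉ closure ((Submodule.span ℂ (Set.range fun k : ℕ =>
            (Atil ^ k) ((WithLp.equiv 2 (H × H)).symm (g, 0)))) : Set (WithLp 2 (H × H))) :=
  stmt4_general A g f φ₀ hcyc hf Atil hAtil
end

section
/- Let A be a bounded operator on a Hilbert space H and g ∈ ran A. If the Krylov intersection I(A,g) := closure(K(A,g)) ∩ A(K(A,g)^⊥) is trivial (equals {0}) and A is injective, then any solution f to Af = g belongs to the closure of K(A,g). -/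
/-!
Decompose `f = y + z` with `y` in the closed Krylov space `T` and `z ⊥ K(A,g)`. Since `T` is
`A`-invariant and contains `g = A f`, the vector `A z = g - A y` lies in `T ∩ A(K(A,g)^⊥)`, so it
vanishes; injectivity of `A` then forces `z = 0`, i.e. `f = y ∈ T`.
-/

section Krylov

variable {R M : Type*} [Semiring R] [AddCommMonoid M] [Module R M] [TopologicalSpace M]

def krylovSubspace (A : M →L[R] M) (g : M) : Submodule R M :=
  Submodule.span R (Set.range fun k : ℕ => (A ^ k) g)

theorem self_mem_krylovSubspace (A : M →L[R] M) (g : M) : g ∈ krylovSubspace A g :=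
  Submodule.subset_span ⟨0, by simp⟩

theorem krylovSubspace_mem_invtSubmodule (A : M →L[R] M) (g : M) :
    krylovSubspace A g ∈ Module.End.invtSubmodule (A : M →ₗ[R] M) := by
  rw [Module.End.mem_invtSubmodule, krylovSubspace, Submodule.span_le]
  rintro _ ⟨k, rfl⟩
  exact Submodule.subset_span ⟨k + 1, by simp only [pow_succ']; rfl⟩

end Krylov

theorem mem_topologicalClosure_of_inter_image_orthogonal_eq_zero {𝕜 E : Type*} [RCLike 𝕜]
    [NormedAddCommGroup E] [InnerProductSpace 𝕜 E] [CompleteSpace E]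
    {K : Submodule 𝕜 E} {A : E →L[𝕜] E} (hA : Function.Injective A)
    (hK : K ∈ Module.End.invtSubmodule (A : E →ₗ[𝕜] E)) {f : E}
    (hf : A f ∈ K.topologicalClosure)
    (hI : (K.topologicalClosure : Set E) ∩ A '' (Kᗮ : Set E) = {0}) :
    f ∈ K.topologicalClosure := by
  set T := K.topologicalClosure
  obtain ⟨y, hy, z, hz, rfl⟩ := T.exists_add_mem_mem_orthogonal f
  rw [Submodule.orthogonal_closure] at hz
  have hyT : A y ∈ T := Submodule.topologicalClosure_mem_invtSubmodule hK hy
  have hzT : A z ∈ T := by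
    simpa [map_add] using T.sub_mem hf hyT
  have hAz : A z ∈ (T : Set E) ∩ A '' (Kᗮ : Set E) := ⟨hzT, z, hz, rfl⟩
  rw [hI, Set.mem_singleton_iff, ← A.map_zero] at hAz
  simpa [hA hAz] using hy

/-- If `A` is bounded and injective, `g ∈ ran A`, and the Krylov intersection
`I(A,g) = closure(K(A,g)) ∩ A(K(A,g)^⊥)` is trivial, then any solution `f` of
`Af = g` belongs to the closure of `K(A,g)`. -/
theorem stmt5 {H : Type*} [NormedAddCommGroup H] [InnerProductSpace ℂ H] [CompleteSpace H]
    (A : H →L[ℂ] H) (hinj : Function.Injective A)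
    (g f : H) (hf : A f = g)
    (hI : closure ((Submodule.span ℂ (Set.range fun k : ℕ => (A ^ k) g)) : Set H)
        ∩ (A '' ((Submodule.span ℂ (Set.range fun k : ℕ => (A ^ k) g))ᗮ : Set H)) = {0}) :
    f ∈ closure ((Submodule.span ℂ (Set.range fun k : ℕ => (A ^ k) g)) : Set H) := by
  have hAf : A f ∈ (krylovSubspace A g).topologicalClosure := by
    rw [hf]; exact Submodule.le_topologicalClosure _ (self_mem_krylovSubspace A g)
  exact mem_topologicalClosure_of_inter_image_orthogonal_eq_zero hinj
    (krylovSubspace_mem_invtSubmodule A g) hAf hI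
end

section
/- Let A be a bounded normal operator on a Hilbert space H and g ∈ ran A. Then both closure(K(A,g)) and K(A,g)^⊥ are invariant under A (i.e. A is K(A,g)-reduced) if and only if A*g ∈ closure(K(A,g)). -/
/-!
Since `K(A,g)ᗮ = closure(K(A,g))ᗮ` and the closure is a closed subspace, `K(A,g)ᗮ` is
`A`-invariant iff `closure(K(A,g))` is `A*`-invariant. As `A*` commutes with every power of `A`,
it maps `Aᵏ g` to `Aᵏ (A* g)`, so this happens iff `A* g` lies in the closure, which is itself
`A`-invariant.
-/

open Submodule Module.End

namespace ContinuousLinearMap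

section Krylov

variable {R M : Type*} [Semiring R] [TopologicalSpace M] [AddCommMonoid M] [Module R M]

def krylovSubspace (A : M →L[R] M) (x : M) : Submodule R M :=
  span R (Set.range fun k : ℕ => (A ^ k) x)

theorem mem_krylovSubspace_self (A : M →L[R] M) (x : M) : x ∈ A.krylovSubspace x :=
  subset_span ⟨0, by simp⟩

theorem krylovSubspace_mem_invtSubmodule (A : M →L[R] M) (x : M) :
    A.krylovSubspace x ∈ invtSubmodule (A : M →ₗ[R] M) := by
  rw [mem_invtSubmodule, krylovSubspace, span_le]
  rintro _ ⟨k, rfl⟩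
  exact subset_span ⟨k + 1, by simp [pow_succ']⟩

variable [TopologicalSpace R] [ContinuousAdd M] [ContinuousSMul R M]

theorem topologicalClosure_krylovSubspace_mem_invtSubmodule_iff {A B : M →L[R] M}
    (hAB : Commute A B) (x : M) :
    (A.krylovSubspace x).topologicalClosure ∈ invtSubmodule (B : M →ₗ[R] M) ↔
      B x ∈ (A.krylovSubspace x).topologicalClosure := by
  set C := (A.krylovSubspace x).topologicalClosure
  refine ⟨fun h ↦ h (le_topologicalClosure _ (mem_krylovSubspace_self A x)), fun hBx ↦ ?_⟩
  have hAC : Set.MapsTo A C C :=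
    topologicalClosure_mem_invtSubmodule (krylovSubspace_mem_invtSubmodule A x)
  have hK : A.krylovSubspace x ≤ C.comap (B : M →ₗ[R] M) := by
    rw [krylovSubspace, span_le]
    rintro _ ⟨k, rfl⟩
    have hcomm : B ((A ^ k) x) = (A ^ k) (B x) := congr($((hAB.pow_left k).eq.symm) x)
    show B ((A ^ k) x) ∈ C
    rw [hcomm, FunLike.coe_pow_eq_iterate]
    exact hAC.iterate k hBx
  exact topologicalClosure_minimal _ hK (isClosed_topologicalClosure _ |>.preimage B.continuous)

end Krylov

variable {𝕜 E : Type*} [RCLike 𝕜] [NormedAddCommGroup E] [InnerProductSpace 𝕜 E] [CompleteSpace E]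

theorem krylovSubspace_reduces_iff (A : E →L[𝕜] E) [IsStarNormal A] (x : E) :
    ((A.krylovSubspace x).topologicalClosure ∈ invtSubmodule (A : E →ₗ[𝕜] E) ∧
      (A.krylovSubspace x)ᗮ ∈ invtSubmodule (A : E →ₗ[𝕜] E)) ↔
      adjoint A x ∈ (A.krylovSubspace x).topologicalClosure := by
  have hcomm : Commute A (adjoint A) := by
    rw [← star_eq_adjoint]
    exact (star_comm_self' A).symm
  rw [← orthogonal_closure, ← mem_invtSubmodule_adjoint_iff,
    topologicalClosure_krylovSubspace_mem_invtSubmodule_iff hcomm,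
    and_iff_right (topologicalClosure_mem_invtSubmodule (krylovSubspace_mem_invtSubmodule A x))]

end ContinuousLinearMap

open ContinuousLinearMap in
theorem stmt7_general {H : Type*} [NormedAddCommGroup H] [InnerProductSpace ℂ H] [CompleteSpace H]
    (A : H →L[ℂ] H)
    (hnormal : A.comp (ContinuousLinearMap.adjoint A) = (ContinuousLinearMap.adjoint A).comp A)
    (g : H) :
    ((∀ x ∈ closure ((Submodule.span ℂ (Set.range fun k : ℕ => (A ^ k) g)) : Set H),
        A x ∈ closure ((Submodule.span ℂ (Set.range fun k : ℕ => (A ^ k) g)) : Set H))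
      ∧ (∀ x ∈ ((Submodule.span ℂ (Set.range fun k : ℕ => (A ^ k) g))ᗮ : Set H),
        A x ∈ ((Submodule.span ℂ (Set.range fun k : ℕ => (A ^ k) g))ᗮ : Set H)))
    ↔ ContinuousLinearMap.adjoint A g
        ∈ closure ((Submodule.span ℂ (Set.range fun k : ℕ => (A ^ k) g)) : Set H) := by
  have : IsStarNormal A := ⟨by rw [star_eq_adjoint]; exact hnormal.symm⟩
  exact krylovSubspace_reduces_iff A g

/-- A bounded normal operator `A` with `g ∈ ran A` is `K(A,g)`-reduced (both
`closure(K(A,g))` and `K(A,g)^⊥` are `A`-invariant) if and only if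
`A* g ∈ closure(K(A,g))`. -/
theorem stmt7 {H : Type*} [NormedAddCommGroup H] [InnerProductSpace ℂ H] [CompleteSpace H]
    (A : H →L[ℂ] H)
    (hnormal : A.comp (ContinuousLinearMap.adjoint A) = (ContinuousLinearMap.adjoint A).comp A)
    (g : H) (hg : g ∈ Set.range A) :
    ((∀ x ∈ closure ((Submodule.span ℂ (Set.range fun k : ℕ => (A ^ k) g)) : Set H),
        A x ∈ closure ((Submodule.span ℂ (Set.range fun k : ℕ => (A ^ k) g)) : Set H))
      ∧ (∀ x ∈ ((Submodule.span ℂ (Set.range fun k : ℕ => (A ^ k) g))ᗮ : Set H),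
        A x ∈ ((Submodule.span ℂ (Set.range fun k : ℕ => (A ^ k) g))ᗮ : Set H)))
    ↔ ContinuousLinearMap.adjoint A g
        ∈ closure ((Submodule.span ℂ (Set.range fun k : ℕ => (A ^ k) g)) : Set H) :=
  stmt7_general A hnormal g
end

section
/- Let A be a bounded operator on a Hilbert space H with ker A ⊆ ker A* (in particular, if A is normal), and g ∈ ran A. Then there is at most one f ∈ closure(K(A,g)) with Af = g. -/
/-!
The difference `d` of two Krylov solutions lies in `closure K(A,g) ⊆ closure (ran A)`, since
`g ∈ ran A` makes every Krylov vector `Aᵏ g` lie in `ran A`. On the other hand `A d = 0`, so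
`d ∈ ker A ⊆ ker A* = (ran A)ᗮ = (closure (ran A))ᗮ`, and therefore `d = 0`.
-/

open scoped InnerProduct

theorem Submodule.span_range_pow_apply_le_range {R M : Type*} [Semiring R] [AddCommMonoid M] [Module R M]
    (A : M →ₗ[R] M) {x : M} (hx : x ∈ LinearMap.range A) :
    Submodule.span R (Set.range fun k : ℕ => (A ^ k) x) ≤ LinearMap.range A := by
  rw [Submodule.span_le]
  rintro _ ⟨_ | k, rfl⟩
  · exact hx
  · show (A ^ (k + 1)) x ∈ _
    rw [pow_succ', Module.End.mul_apply]
    exact LinearMap.mem_range_self A _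

theorem ContinuousLinearMap.eq_zero_of_mem_closure_range_of_adjoint_apply_eq_zero
    {𝕜 E F : Type*} [RCLike 𝕜] [NormedAddCommGroup E] [InnerProductSpace 𝕜 E] [CompleteSpace E]
    [NormedAddCommGroup F] [InnerProductSpace 𝕜 F] [CompleteSpace F]
    (A : E →L[𝕜] F) {y : F} (hy : y ∈ A.range.topologicalClosure)
    (hAy : (A†) y = 0) : y = 0 := by
  have hperp : y ∈ A.range.topologicalClosureᗮ := by
    rw [Submodule.orthogonal_closure, A.orthogonal_range]
    exact hAy
  have hinf := Submodule.mem_inf.mpr ⟨hy, hperp⟩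
  rwa [Submodule.inf_orthogonal_eq_bot, Submodule.mem_bot] at hinf

/-- If `A` is bounded with `ker A ⊆ ker A*` (e.g. `A` normal) and `g ∈ ran A`, then
there is at most one Krylov solution: any two solutions of `Af = g` lying in
`closure(K(A,g))` coincide. -/
theorem stmt8 {H : Type*} [NormedAddCommGroup H] [InnerProductSpace ℂ H] [CompleteSpace H]
    (A : H →L[ℂ] H)
    (hker : LinearMap.ker (A : H →ₗ[ℂ] H) ≤ LinearMap.ker ((ContinuousLinearMap.adjoint A : H →L[ℂ] H) : H →ₗ[ℂ] H))
    (g : H) (hg : g ∈ Set.range A) :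
    ∀ f₁ f₂ : H,
      f₁ ∈ closure ((Submodule.span ℂ (Set.range fun k : ℕ => (A ^ k) g)) : Set H) →
      f₂ ∈ closure ((Submodule.span ℂ (Set.range fun k : ℕ => (A ^ k) g)) : Set H) →
      A f₁ = g → A f₂ = g → f₁ = f₂ := by
  intro f₁ f₂ h₁ h₂ hA₁ hA₂
  have hK : Submodule.span ℂ (Set.range fun k : ℕ => (A ^ k) g) ≤ A.range := by
    simpa only [← ContinuousLinearMap.toLinearMap_pow, ContinuousLinearMap.coe_coe] using
      Submodule.span_range_pow_apply_le_range (A : H →ₗ[ℂ] H) hg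
  have hclosure : f₁ - f₂ ∈ A.range.topologicalClosure :=
    Submodule.topologicalClosure_mono hK (Submodule.sub_mem _ h₁ h₂)
  have hadj : (A†) (f₁ - f₂) = 0 := hker (by simp [hA₁, hA₂])
  exact sub_eq_zero.mp (A.eq_zero_of_mem_closure_range_of_adjoint_apply_eq_zero hclosure hadj)
end

section
/- There exists a Hilbert space H, a densely defined closed operator A on H, and a vector g ∈ C^∞(A) such that A(closure(K(A,g)) ∩ D(A)) is not contained in closure(K(A,g)) ('Krylov escape'). Concretely: take H = ℂe₀ ⊕ H' where T' is self-adjoint on H' with cyclic vector g', set T = 0 ⊕ T', pick x₀ ∈ H' \ D(T'), define D(A) = D(T) ∔ span{x₀}, Ax₀ = e₀, Ax = Tx for x ∈ D(T); then A is densely defined and closed, closure(K(A,g)) = H' with g = 0 ⊕ g', x₀ ∈ closure(K(A,g)) ∩ D(A), yet Ax₀ = e₀ ⊥ closure(K(A,g)). -/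
/-!
Let `T` be the weighted shift `T e_j = j e_{j+1}` on `ℓ²(ℕ, ℂ)`, with its maximal domain. It is
closed and densely defined, `T e_0 = 0`, and `e_0` is orthogonal to the range of `T`. The Krylov
space of `g = e_1` is spanned by `Tᵏ g = k! e_{k+1}`, so its closure is `e_0^⊥`. The vector
`x₀ = ∑_{j ≥ 1} j⁻¹ e_j` lies in `e_0^⊥` but not in `D(T)`, since `T x₀` would have all
coefficients `1`. Extend `T` to `A` on `D(T) ∔ ℂ x₀` by `A x₀ = e_0`. The graph of `A` stays closed
because the `x₀`-component of `(u, A u)` is the coordinate `(A u) 0`, which depends continuously on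
`A u`. Then `x₀ ∈ closure K(A, g) ∩ D(A)` while `A x₀ = e_0 ⊥ closure K(A, g)`.
-/

open scoped ENNReal lp

namespace LinearPMap

variable {K E F : Type*} [Field K] [AddCommGroup E] [Module K E] [AddCommGroup F] [Module K F]

theorem mk_mem_graph_supSpanSingleton (f : E →ₗ.[K] F) {x : E} (y : F) (hx : x ∉ f.domain)
    {c : E} (hc : c ∈ f.domain) (μ : K) :
    (c + μ • x, f ⟨c, hc⟩ + μ • y) ∈ (f.supSpanSingleton x y hx).graph := by
  convert (f.supSpanSingleton x y hx).mem_graph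
    ⟨c + μ • x, Submodule.add_mem_sup hc (Submodule.mem_span_singleton.2 ⟨μ, rfl⟩)⟩
  exact (f.supSpanSingleton_apply_mk x y hx c hc μ).symm

theorem mem_graph_supSpanSingleton_iff (f : E →ₗ.[K] F) {x : E} {y : F} (hx : x ∉ f.domain)
    {φ : F →ₗ[K] K} (hφy : φ y = 1) (hφf : ∀ u, φ (f u) = 0) {z : E × F} :
    z ∈ (f.supSpanSingleton x y hx).graph ↔ (z.1 - φ z.2 • x, z.2 - φ z.2 • y) ∈ f.graph := by
  obtain ⟨a, b⟩ := z
  constructor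
  · intro hz
    obtain ⟨w, rfl, -⟩ := (mem_graph_iff _).1 hz
    have hw : (w : E) ∈ f.domain ⊔ K ∙ x := w.2
    obtain ⟨c, hc, v, hv, hcw⟩ := Submodule.mem_sup.1 hw
    obtain ⟨μ, rfl⟩ := Submodule.mem_span_singleton.1 hv
    have hmk := f.mk_mem_graph_supSpanSingleton y hx hc μ
    rw [hcw] at hmk
    obtain rfl := mem_graph_snd_inj _ hz hmk rfl
    rw [← hcw]
    simpa [hφy, hφf] using f.mem_graph ⟨c, hc⟩
  · intro h
    have hc := mem_domain_of_mem_graph h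
    have hb := (image_iff hc).2 h
    simpa [← hb] using f.mk_mem_graph_supSpanSingleton y hx hc (φ b)

variable [TopologicalSpace K] [TopologicalSpace E] [IsTopologicalAddGroup E]
  [ContinuousSMul K E] [TopologicalSpace F] [IsTopologicalAddGroup F] [ContinuousSMul K F]

theorem IsClosed.supSpanSingleton {f : E →ₗ.[K] F} (hf : f.IsClosed) {x : E} {y : F}
    (hx : x ∉ f.domain) {φ : F →L[K] K} (hφy : φ y = 1) (hφf : ∀ u, φ (f u) = 0) :
    (f.supSpanSingleton x y hx).IsClosed := by
  have hgraph : ((f.supSpanSingleton x y hx).graph : Set (E × F)) =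
      (fun z : E × F => (z.1 - φ z.2 • x, z.2 - φ z.2 • y)) ⁻¹' f.graph := by
    ext z
    exact f.mem_graph_supSpanSingleton_iff hx (φ := (φ : F →ₗ[K] K)) hφy hφf
  unfold LinearPMap.IsClosed
  rw [hgraph]
  exact hf.preimage (by fun_prop)

end LinearPMap

variable {𝕜 : Type*} [NormedField 𝕜]

def weightedShiftₗ (w : ℕ → 𝕜) : (ℕ → 𝕜) →ₗ[𝕜] ℕ → 𝕜 where
  toFun u
    | 0 => 0
    | j + 1 => w j * u j
  map_add' u v := by ext (_ | j) <;> simp [mul_add]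
  map_smul' a u := by ext (_ | j) <;> simp [mul_left_comm]

@[simp] theorem weightedShiftₗ_apply_zero (w u : ℕ → 𝕜) : weightedShiftₗ w u 0 = 0 := rfl

@[simp] theorem weightedShiftₗ_apply_succ (w u : ℕ → 𝕜) (j : ℕ) :
    weightedShiftₗ w u (j + 1) = w j * u j := rfl

theorem continuous_weightedShiftₗ (w : ℕ → 𝕜) : Continuous (weightedShiftₗ w) :=
  continuous_pi fun
    | 0 => continuous_const
    | j + 1 => continuous_const.mul (continuous_apply j)

theorem weightedShiftₗ_single (w : ℕ → 𝕜) (i : ℕ) (a : 𝕜) :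
    weightedShiftₗ w (Pi.single i a) = Pi.single (i + 1) (w i * a) := by
  ext (_ | j)
  · simp
  · by_cases h : j = i
    · subst h; simp
    · simp [h]

namespace lp

theorem mem_closure_of_single_mem {α : Type*} [DecidableEq α] {E : α → Type*}
    [∀ i, NormedAddCommGroup (E i)] {p : ℝ≥0∞} [Fact (1 ≤ p)] (hp : p ≠ ⊤)
    {S : AddSubmonoid (lp E p)} {f : lp E p} (h : ∀ i, lp.single p i (f i) ∈ S) :
    f ∈ closure (S : Set (lp E p)) :=
  mem_closure_of_tendsto (lp.hasSum_single hp f) (.of_forall fun _ => S.sum_mem fun i _ => h i)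

variable {p : ℝ≥0∞}

def weightedShiftDomain (w : ℕ → 𝕜) : Submodule 𝕜 ℓ^p(ℕ, 𝕜) where
  carrier := {u | Memℓp (weightedShiftₗ w u) p}
  zero_mem' := by
    change Memℓp (weightedShiftₗ w 0) p
    rw [map_zero]
    exact zero_memℓp
  add_mem' {u v} hu hv := by
    change Memℓp (weightedShiftₗ w (⇑u + ⇑v)) p
    rw [map_add]
    exact hu.add hv
  smul_mem' a u hu := by
    change Memℓp (weightedShiftₗ w (a • ⇑u)) p
    rw [map_smul]
    exact hu.const_smul a

def weightedShift (w : ℕ → 𝕜) : ℓ^p(ℕ, 𝕜) →ₗ.[𝕜] ℓ^p(ℕ, 𝕜) where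
  domain := weightedShiftDomain w
  toFun :=
    { toFun u := ⟨weightedShiftₗ w ⇑(u : ℓ^p(ℕ, 𝕜)), u.2⟩
      map_add' u v := lp.ext (map_add (weightedShiftₗ w) ⇑(u : ℓ^p(ℕ, 𝕜)) ⇑(v : ℓ^p(ℕ, 𝕜)))
      map_smul' a u := lp.ext (map_smul (weightedShiftₗ w) a ⇑(u : ℓ^p(ℕ, 𝕜))) }

theorem mem_graph_weightedShift_iff (w : ℕ → 𝕜) {z : ℓ^p(ℕ, 𝕜) × ℓ^p(ℕ, 𝕜)} :
    z ∈ (weightedShift w).graph ↔ ⇑z.2 = weightedShiftₗ w z.1 := by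
  obtain ⟨a, b⟩ := z
  constructor
  · intro h
    obtain ⟨u, rfl, rfl⟩ := (LinearPMap.mem_graph_iff _).1 h
    rfl
  · intro h
    have ha : a ∈ (weightedShift w).domain := by
      change Memℓp (weightedShiftₗ w a) p
      rw [← h]
      exact b.2
    exact (LinearPMap.mem_graph_iff _).2 ⟨⟨a, ha⟩, rfl, lp.ext h.symm⟩

theorem isClosed_weightedShift [Fact (1 ≤ p)] (w : ℕ → 𝕜) :
    (weightedShift (p := p) w).IsClosed := by
  have hgraph : ((weightedShift (p := p) w).graph : Set (ℓ^p(ℕ, 𝕜) × ℓ^p(ℕ, 𝕜))) =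
      {z : ℓ^p(ℕ, 𝕜) × ℓ^p(ℕ, 𝕜) | ⇑z.2 = weightedShiftₗ w z.1} := by
    ext z
    exact mem_graph_weightedShift_iff w
  have hcoe : Continuous fun u : ℓ^p(ℕ, 𝕜) => (u : ℕ → 𝕜) :=
    (lp.uniformContinuous_coe (E := fun _ : ℕ => 𝕜) (p := p)).continuous
  unfold LinearPMap.IsClosed
  rw [hgraph]
  exact isClosed_eq (hcoe.comp continuous_snd)
    ((continuous_weightedShiftₗ w).comp (hcoe.comp continuous_fst))

theorem single_mem_weightedShift_domain (w : ℕ → 𝕜) (i : ℕ) (a : 𝕜) :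
    lp.single p i a ∈ (weightedShift w).domain := by
  change Memℓp (weightedShiftₗ w (Pi.single i a)) p
  rw [weightedShiftₗ_single]
  exact lp.memℓp (lp.single (E := fun _ : ℕ => 𝕜) p (i + 1) (w i * a))

theorem weightedShift_single (w : ℕ → 𝕜) (i : ℕ) (a : 𝕜) :
    weightedShift w ⟨lp.single p i a, single_mem_weightedShift_domain w i a⟩ =
      lp.single p (i + 1) (w i * a) := by
  apply lp.ext
  change weightedShiftₗ w (Pi.single i a) = Pi.single (i + 1) (w i * a)
  exact weightedShiftₗ_single w i a

theorem dense_weightedShift_domain [Fact (1 ≤ p)] (hp : p ≠ ⊤) (w : ℕ → 𝕜) :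
    Dense ((weightedShift (p := p) w).domain : Set ℓ^p(ℕ, 𝕜)) := fun _ =>
  mem_closure_of_single_mem hp (S := (weightedShift w).domain.toAddSubmonoid)
    fun i => single_mem_weightedShift_domain w i _

theorem closure_span_range_single_succ [Fact (1 ≤ p)] (hp : p ≠ ⊤) {c : ℕ → 𝕜}
    (hc : ∀ k, c k ≠ 0) :
    closure (Submodule.span 𝕜 (Set.range fun k => lp.single (E := fun _ : ℕ => 𝕜) p (k + 1) (c k))
      : Set ℓ^p(ℕ, 𝕜)) = {u | u 0 = 0} := by
  apply subset_antisymm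
  · refine closure_minimal ?_ (isClosed_eq (lp.evalCLM 𝕜 (fun _ : ℕ => 𝕜) p 0).continuous
      continuous_const)
    refine Submodule.span_le (p := LinearMap.ker (lp.evalₗ (𝕜 := 𝕜) (fun _ : ℕ => 𝕜) p 0)).2 ?_
    rintro _ ⟨k, rfl⟩
    simp
  · intro u (hu : u 0 = 0)
    refine mem_closure_of_single_mem hp (S := (Submodule.span 𝕜
      (Set.range fun k => lp.single (E := fun _ : ℕ => 𝕜) p (k + 1) (c k))).toAddSubmonoid)
      fun i => ?_
    cases i with
    | zero => simp [hu]
    | succ k =>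
      have hsingle : lp.single p (k + 1) (u (k + 1)) =
          (u (k + 1) / c k) • lp.single (E := fun _ : ℕ => 𝕜) p (k + 1) (c k) := by
        rw [← lp.single_smul, smul_eq_mul, div_mul_cancel₀ _ (hc k)]
      rw [hsingle]
      exact Submodule.smul_mem _ _ (Submodule.subset_span ⟨k, rfl⟩)

end lp

namespace KrylovEscape

noncomputable def T : ℓ²(ℕ, ℂ) →ₗ.[ℂ] ℓ²(ℕ, ℂ) := lp.weightedShift fun j : ℕ => (j : ℂ)

theorem memℓp_natCast_inv : Memℓp (fun j : ℕ => (j : ℂ)⁻¹) 2 := by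
  apply memℓp_gen
  simp [Real.summable_nat_pow_inv]

/-- Since `(0 : ℂ)⁻¹ = 0`, the `0`-th coordinate of `x₀` vanishes. -/
noncomputable def x₀ : ℓ²(ℕ, ℂ) := ⟨fun j : ℕ => (j : ℂ)⁻¹, memℓp_natCast_inv⟩

theorem x₀_not_mem_domain : x₀ ∉ T.domain := by
  intro h
  have hsum := (summable_nat_add_iff 2).2 ((h : Memℓp _ 2).summable (by norm_num))
  have hone : ∀ j : ℕ,
      ‖weightedShiftₗ (fun j : ℕ => (j : ℂ)) x₀ (j + 2)‖ ^ (2 : ℝ≥0∞).toReal = 1 := fun j => by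
    simp [x₀, mul_inv_cancel₀ (Nat.cast_add_one_ne_zero (R := ℂ) j)]
  simp only [hone] at hsum
  exact one_ne_zero ((summable_const_iff 1).1 hsum)

noncomputable def A : ℓ²(ℕ, ℂ) →ₗ.[ℂ] ℓ²(ℕ, ℂ) :=
  T.supSpanSingleton x₀ (lp.single 2 0 1) x₀_not_mem_domain

noncomputable def orbit (k : ℕ) : ℓ²(ℕ, ℂ) := lp.single 2 (k + 1) (k.factorial : ℂ)

theorem orbit_mem_domain (k : ℕ) : orbit k ∈ A.domain :=
  Submodule.mem_sup_left (lp.single_mem_weightedShift_domain _ _ _)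

theorem A_apply_orbit (k : ℕ) : A ⟨orbit k, orbit_mem_domain k⟩ = orbit (k + 1) := by
  have hk : orbit k ∈ T.domain :=
    lp.single_mem_weightedShift_domain (p := 2) (fun j : ℕ => (j : ℂ)) (k + 1) (k.factorial : ℂ)
  refine (T.supSpanSingleton_apply_of_mem (lp.single 2 0 1) x₀_not_mem_domain
    ⟨orbit k, orbit_mem_domain k⟩ hk).trans ?_
  refine (lp.weightedShift_single (fun j : ℕ => (j : ℂ)) (k + 1) (k.factorial : ℂ)).trans ?_
  rw [orbit, Nat.factorial_succ, Nat.cast_mul]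

theorem x₀_mem_domain : x₀ ∈ A.domain :=
  Submodule.mem_sup_right (Submodule.mem_span_singleton_self x₀)

theorem A_apply_x₀ (hx : x₀ ∈ A.domain) : A ⟨x₀, hx⟩ = lp.single 2 0 1 :=
  T.supSpanSingleton_apply_self _ _

theorem dense_domain_A : Dense (A.domain : Set ℓ²(ℕ, ℂ)) :=
  (lp.dense_weightedShift_domain (by norm_num) _).mono (SetLike.coe_subset_coe.2 le_sup_left)

theorem isClosed_A : A.IsClosed :=
  (lp.isClosed_weightedShift _).supSpanSingleton x₀_not_mem_domain
    (φ := lp.evalCLM ℂ (fun _ : ℕ => ℂ) 2 0) (by simp [lp.evalCLM]) fun _ => rfl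

theorem closure_span_orbit :
    closure (Submodule.span ℂ (Set.range orbit) : Set ℓ²(ℕ, ℂ)) = {u | u 0 = 0} :=
  lp.closure_span_range_single_succ (by norm_num) fun k => Nat.cast_ne_zero.2 k.factorial_ne_zero

end KrylovEscape

/-- **Krylov escape.** There exist a Hilbert space `H`, a densely defined closed
operator `A` on `H`, and a `C^∞(A)`-vector `g` (with orbit `ψ k = Aᵏg`) such that some
`x ∈ closure(K(A,g)) ∩ D(A)` satisfies `Ax ∉ closure(K(A,g))`. -/
theorem stmt12 :
    ∃ (H : Type) (_ : NormedAddCommGroup H) (_ : InnerProductSpace ℂ H) (_ : CompleteSpace H)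
      (A : H →ₗ.[ℂ] H) (g : H) (ψ : ℕ → H) (hmem : ∀ k, ψ k ∈ A.domain),
      Dense (A.domain : Set H)
      ∧ IsClosed (A.graph : Set (H × H))
      ∧ ψ 0 = g
      ∧ (∀ k, A ⟨ψ k, hmem k⟩ = ψ (k + 1))
      ∧ ∃ x : H, ∃ hx : x ∈ A.domain,
          x ∈ closure ((Submodule.span ℂ (Set.range ψ)) : Set H)
          ∧ A ⟨x, hx⟩ ∉ closure ((Submodule.span ℂ (Set.range ψ)) : Set H) := by
  open KrylovEscape in
  refine ⟨ℓ²(ℕ, ℂ), inferInstance, inferInstance, inferInstance, A, orbit 0, orbit,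
    orbit_mem_domain, dense_domain_A, isClosed_A, rfl, A_apply_orbit, x₀, x₀_mem_domain, ?_⟩
  rw [closure_span_orbit, A_apply_x₀]
  simp [x₀]
end

section
/- Let A be a densely defined closed operator on H, g ∈ ran A ∩ C^∞(A), and f ∈ D(A) with Af = g. If the pair (A,g) satisfies the Krylov-core condition and f ∈ closure(K(A,g)), then closure(A K(A,g)) = closure(K(A,g)). -/
/-- If `A` is densely defined and closed, `g ∈ ran A ∩ C^∞(A)` (orbit `ψ k = Aᵏg`),
`f ∈ D(A)` solves `Af = g`, the pair `(A,g)` satisfies the Krylov-core condition, and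
`f ∈ closure(K(A,g))`, then `closure(A K(A,g)) = closure(K(A,g))`. -/
theorem stmt15 {H : Type*} [NormedAddCommGroup H] [InnerProductSpace ℂ H] [CompleteSpace H]
    (A : H →ₗ.[ℂ] H) (hdense : Dense (A.domain : Set H))
    (hclosed : IsClosed (A.graph : Set (H × H)))
    (g : H) (ψ : ℕ → H) (hψ0 : ψ 0 = g)
    (hmem : ∀ k, ψ k ∈ A.domain)
    (hstep : ∀ k, A ⟨ψ k, hmem k⟩ = ψ (k + 1))
    (f : H) (hf : f ∈ A.domain) (hAf : A ⟨f, hf⟩ = g)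
    (hcore : ∀ x : H, ∀ hx : x ∈ A.domain,
        x ∈ closure ((Submodule.span ℂ (Set.range ψ)) : Set H) →
        (x, A ⟨x, hx⟩) ∈ closure {p : H × H | ∃ hp : p.1 ∈ A.domain,
            p.1 ∈ Submodule.span ℂ (Set.range ψ) ∧ A ⟨p.1, hp⟩ = p.2})
    (hfK : f ∈ closure ((Submodule.span ℂ (Set.range ψ)) : Set H)) :
    closure {y : H | ∃ k, ∃ hk : k ∈ A.domain,
        k ∈ Submodule.span ℂ (Set.range ψ) ∧ A ⟨k, hk⟩ = y}
      = closure ((Submodule.span ℂ (Set.range ψ)) : Set H) := by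
  set K : Submodule ℂ H := Submodule.span ℂ (Set.range ψ) with hKdef
  set AK : Set H := {y : H | ∃ k, ∃ hk : k ∈ A.domain,
      k ∈ K ∧ A ⟨k, hk⟩ = y} with hAKdef
  -- key: every element of K maps (via the graph) to an element of K
  have key : ∀ x ∈ K, ∃ y ∈ K, (x, y) ∈ A.graph := by
    intro x hx
    induction hx using Submodule.span_induction with
    | mem x hxr =>
      obtain ⟨k, rfl⟩ := hxr
      exact ⟨ψ (k + 1), Submodule.subset_span ⟨k + 1, rfl⟩, by
        rw [LinearPMap.mem_graph_iff]; exact ⟨⟨ψ k, hmem k⟩, rfl, hstep k⟩⟩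
    | zero => exact ⟨0, K.zero_mem, A.graph.zero_mem⟩
    | add x y _ _ hx hy =>
      obtain ⟨a, haK, hag⟩ := hx
      obtain ⟨b, hbK, hbg⟩ := hy
      exact ⟨a + b, K.add_mem haK hbK, by simpa using A.graph.add_mem hag hbg⟩
    | smul c x _ hx =>
      obtain ⟨a, haK, hag⟩ := hx
      exact ⟨c • a, K.smul_mem c haK, by simpa using A.graph.smul_mem c hag⟩
  -- AK ⊆ K
  have hAKsubK : AK ⊆ (K : Set H) := by
    rintro y ⟨k, hk, hkK, rfl⟩
    obtain ⟨y', hy'K, hgraph⟩ := key k hkK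
    rw [LinearPMap.mem_graph_iff] at hgraph
    obtain ⟨z, hz1, hz2⟩ := hgraph
    have hz : z = ⟨k, hk⟩ := Subtype.ext hz1
    rw [hz] at hz2
    rw [hz2]; exact hy'K
  -- AK as a submodule
  have hAKset : AK = ((A.graph ⊓ (K.prod ⊤)).map (LinearMap.snd ℂ H H) : Set H) := by
    ext y
    constructor
    · rintro ⟨k, hk, hkK, rfl⟩
      exact ⟨(k, A ⟨k, hk⟩), ⟨A.mem_graph ⟨k, hk⟩, ⟨hkK, trivial⟩⟩, rfl⟩
    · rintro ⟨⟨a, b⟩, ⟨hg, haK, -⟩, rfl⟩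
      rw [SetLike.mem_coe, LinearPMap.mem_graph_iff] at hg
      obtain ⟨z, hz1, hz2⟩ := hg
      refine ⟨a, ?_, haK, ?_⟩
      · show (a, b).1 ∈ A.domain
        rw [← hz1]; exact z.2
      · rw [show (⟨a, _⟩ : A.domain) = z from Subtype.ext hz1.symm]; exact hz2
  -- g ∈ closure AK
  have hgAK : g ∈ closure AK := by
    have h1 := hcore f hf hfK
    rw [hAf] at h1
    have h2 : Prod.snd '' {p : H × H | ∃ hp : p.1 ∈ A.domain,
        p.1 ∈ K ∧ A ⟨p.1, hp⟩ = p.2} ⊆ AK := by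
      rintro y ⟨⟨a, b⟩, ⟨ha, haK, hab⟩, rfl⟩
      exact ⟨a, ha, haK, hab⟩
    have h3 : g ∈ Prod.snd '' closure {p : H × H | ∃ hp : p.1 ∈ A.domain,
        p.1 ∈ K ∧ A ⟨p.1, hp⟩ = p.2} := ⟨(f, g), h1, rfl⟩
    exact closure_mono h2
      (image_closure_subset_closure_image continuous_snd h3)
  -- K ⊆ closure AK
  have hKsub : (K : Set H) ⊆ closure AK := by
    have : K ≤ ((A.graph ⊓ (K.prod ⊤)).map
        (LinearMap.snd ℂ H H)).topologicalClosure := by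
      rw [hKdef]
      apply Submodule.span_le.2
      rintro _ ⟨k, rfl⟩
      have hclAK : closure AK =
          (((A.graph ⊓ (K.prod ⊤)).map
            (LinearMap.snd ℂ H H)).topologicalClosure : Set H) := by
        rw [Submodule.topologicalClosure_coe, ← hAKset]
      cases k with
      | zero =>
        rw [hψ0]
        have := hgAK
        rw [hclAK] at this
        exact this
      | succ n =>
        have : ψ (n + 1) ∈ AK :=
          ⟨ψ n, hmem n, Submodule.subset_span ⟨n, rfl⟩, hstep n⟩
        have h2 : ψ (n + 1) ∈ closure AK := subset_closure this
        rw [hclAK] at h2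
        exact h2
    intro x hx
    have h := this hx
    rw [hAKset, ← Submodule.topologicalClosure_coe]
    exact h
  apply Set.Subset.antisymm
  · exact closure_minimal (hAKsubK.trans subset_closure) isClosed_closure
  · exact closure_minimal hKsub isClosed_closure
end

section
/- Let A be a densely defined closed injective operator on H, g ∈ ran A ∩ C^∞(A), f ∈ D(A) with Af = g. Assume: (b) A(closure(K(A,g)) ∩ D(A)) ⊆ closure(K(A,g)); (c) the orthogonal projection P_K f of f onto closure(K(A,g)) lies in D(A); (d) the generalised Krylov intersection I(A,g) := closure(K(A,g)) ∩ A(K(A,g)^⊥ ∩ D(A)) equals {0}. Then f ∈ closure(K(A,g)). -/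
/-- If `A` is densely defined, closed and injective, `g ∈ ran A ∩ C^∞(A)` (orbit
`ψ k = Aᵏg`), `f ∈ D(A)` solves `Af = g`, and moreover: (b) no Krylov escape,
(c) the orthogonal projection `f₁ = P_K f` of `f` onto `closure(K(A,g))` lies in
`D(A)`, (d) the generalised Krylov intersection
`I(A,g) = closure(K(A,g)) ∩ A(K(A,g)^⊥ ∩ D(A))` is trivial; then `f ∈ closure(K(A,g))`. -/
theorem stmt16 {H : Type*} [NormedAddCommGroup H] [InnerProductSpace ℂ H] [CompleteSpace H]
    (A : H →ₗ.[ℂ] H) (hdense : Dense (A.domain : Set H))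
    (hclosed : IsClosed (A.graph : Set (H × H)))
    (hinj : ∀ (x : H) (hx : x ∈ A.domain), A ⟨x, hx⟩ = 0 → x = 0)
    (g : H) (ψ : ℕ → H) (hψ0 : ψ 0 = g)
    (hmem : ∀ k, ψ k ∈ A.domain)
    (hstep : ∀ k, A ⟨ψ k, hmem k⟩ = ψ (k + 1))
    (f : H) (hf : f ∈ A.domain) (hAf : A ⟨f, hf⟩ = g)
    -- (b) no Krylov escape
    (hb : ∀ x : H, ∀ hx : x ∈ A.domain,
        x ∈ closure ((Submodule.span ℂ (Set.range ψ)) : Set H) →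
        A ⟨x, hx⟩ ∈ closure ((Submodule.span ℂ (Set.range ψ)) : Set H))
    -- (c) the projection `f₁ = P_K f` of `f` onto `closure(K(A,g))` belongs to `D(A)`
    (f₁ : H)
    (hf₁K : f₁ ∈ closure ((Submodule.span ℂ (Set.range ψ)) : Set H))
    (hf₁perp : f - f₁ ∈ (Submodule.span ℂ (Set.range ψ))ᗮ)
    (hf₁dom : f₁ ∈ A.domain)
    -- (d) triviality of the generalised Krylov intersection
    (hI : {y : H | y ∈ closure ((Submodule.span ℂ (Set.range ψ)) : Set H)
        ∧ ∃ w, ∃ hw : w ∈ A.domain, w ∈ (Submodule.span ℂ (Set.range ψ))ᗮ ∧ A ⟨w, hw⟩ = y}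
      = {0}) :
    f ∈ closure ((Submodule.span ℂ (Set.range ψ)) : Set H) := by
  set K := Submodule.span ℂ (Set.range ψ) with hK
  have hf₂dom : f - f₁ ∈ A.domain := sub_mem hf hf₁dom
  have hAf₂ : A ⟨f - f₁, hf₂dom⟩ = g - A ⟨f₁, hf₁dom⟩ := by
    have : (⟨f - f₁, hf₂dom⟩ : A.domain) = ⟨f, hf⟩ - ⟨f₁, hf₁dom⟩ := rfl
    rw [this, A.map_sub, hAf]
  have hginK : g ∈ closure (K : Set H) := by
    refine subset_closure ?_
    exact hψ0 ▸ Submodule.subset_span ⟨0, rfl⟩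
  have hAf₁K : A ⟨f₁, hf₁dom⟩ ∈ closure (K : Set H) := hb f₁ hf₁dom hf₁K
  have hAf₂K : A ⟨f - f₁, hf₂dom⟩ ∈ closure (K : Set H) := by
    rw [hAf₂]
    have hCl : IsClosed (closure (K : Set H)) := isClosed_closure
    have := (Submodule.topologicalClosure K).sub_mem
      (show g ∈ K.topologicalClosure from hginK)
      (show A ⟨f₁, hf₁dom⟩ ∈ K.topologicalClosure from hAf₁K)
    exact this
  have hmemI : A ⟨f - f₁, hf₂dom⟩ ∈ ({(0 : H)} : Set H) := by
    rw [← hI]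
    exact ⟨hAf₂K, f - f₁, hf₂dom, hf₁perp, rfl⟩
  have : f - f₁ = 0 := hinj _ hf₂dom (by simpa using hmemI)
  rw [sub_eq_zero.mp this]; exact hf₁K
end

section
/- Let A be a densely defined closed operator on H with everywhere-defined bounded inverse, g ∈ ran A ∩ C^∞(A), and suppose the pair (A,g) satisfies the Krylov-core condition. If the solution f = A⁻¹g belongs to closure(K(A,g)), then the generalised Krylov intersection I(A,g) = closure(K(A,g)) ∩ A(K(A,g)^⊥ ∩ D(A)) equals {0}. -/
/-- If `A` is densely defined, closed, with everywhere-defined bounded inverse `B`,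
`g ∈ ran A ∩ C^∞(A)` (orbit `ψ k = Aᵏg`), the pair `(A,g)` satisfies the Krylov-core
condition, and the solution `f` of `Af = g` belongs to `closure(K(A,g))`, then the
generalised Krylov intersection `I(A,g) = closure(K(A,g)) ∩ A(K(A,g)^⊥ ∩ D(A))` is
trivial. -/
theorem stmt17 {H : Type*} [NormedAddCommGroup H] [InnerProductSpace ℂ H] [CompleteSpace H]
    (A : H →ₗ.[ℂ] H) (hdense : Dense (A.domain : Set H))
    (hclosed : IsClosed (A.graph : Set (H × H)))
    (B : H →L[ℂ] H)
    (hBA : ∀ (x : H) (hx : x ∈ A.domain), B (A ⟨x, hx⟩) = x)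
    (hAB : ∀ y : H, ∃ hy : B y ∈ A.domain, A ⟨B y, hy⟩ = y)
    (g : H) (ψ : ℕ → H) (hψ0 : ψ 0 = g)
    (hmem : ∀ k, ψ k ∈ A.domain)
    (hstep : ∀ k, A ⟨ψ k, hmem k⟩ = ψ (k + 1))
    (f : H) (hf : f ∈ A.domain) (hAf : A ⟨f, hf⟩ = g)
    (hcore : ∀ x : H, ∀ hx : x ∈ A.domain,
        x ∈ closure ((Submodule.span ℂ (Set.range ψ)) : Set H) →
        (x, A ⟨x, hx⟩) ∈ closure {p : H × H | ∃ hp : p.1 ∈ A.domain,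
            p.1 ∈ Submodule.span ℂ (Set.range ψ) ∧ A ⟨p.1, hp⟩ = p.2})
    (hfK : f ∈ closure ((Submodule.span ℂ (Set.range ψ)) : Set H)) :
    {y : H | y ∈ closure ((Submodule.span ℂ (Set.range ψ)) : Set H)
        ∧ ∃ w, ∃ hw : w ∈ A.domain, w ∈ (Submodule.span ℂ (Set.range ψ))ᗮ ∧ A ⟨w, hw⟩ = y}
      = {0} := by
  set K : Submodule ℂ H := Submodule.span ℂ (Set.range ψ) with hKdef
  -- K ≤ A.domain
  have hKle : K ≤ A.domain := by
    rw [hKdef, Submodule.span_le]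
    rintro _ ⟨k, rfl⟩; exact hmem k
  -- M = A(K)
  set M : Submodule ℂ H := Submodule.map A.toFun (K.comap A.domain.subtype) with hMdef
  have hMmem : ∀ x (hx : x ∈ A.domain), x ∈ K → A ⟨x, hx⟩ ∈ M := by
    intro x hx hxK
    exact ⟨⟨x, hx⟩, hxK, rfl⟩
  -- g ∈ closure M
  have hgM : g ∈ closure (M : Set H) := by
    have h := hcore f hf hfK
    have h2 : Prod.snd '' closure {p : H × H | ∃ hp : p.1 ∈ A.domain,
        p.1 ∈ Submodule.span ℂ (Set.range ψ) ∧ A ⟨p.1, hp⟩ = p.2} ⊆ closure (M : Set H) := by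
      refine (image_closure_subset_closure_image continuous_snd).trans (closure_mono ?_)
      rintro _ ⟨⟨x, y⟩, ⟨hp, hxK, hAx⟩, rfl⟩
      exact hAx ▸ hMmem x hp hxK
    have : g = (f, A ⟨f, hf⟩).2 := by simp [hAf]
    rw [this]
    exact h2 ⟨(f, A ⟨f, hf⟩), h, rfl⟩
  -- K ⊆ closure M
  have hKM : (K : Set H) ⊆ closure (M : Set H) := by
    have : K ≤ M.topologicalClosure := by
      rw [hKdef, Submodule.span_le]
      rintro _ ⟨k, rfl⟩
      cases k with
      | zero => exact hψ0 ▸ hgM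
      | succ n =>
        exact subset_closure ((hstep n) ▸ hMmem (ψ n) (hmem n) (Submodule.subset_span ⟨n, rfl⟩))
    exact this
  ext y
  simp only [Set.mem_setOf_eq, Set.mem_singleton_iff]
  constructor
  · rintro ⟨hyK, w, hw, hwperp, rfl⟩
    -- A w ∈ closure M
    have hyM : A ⟨w, hw⟩ ∈ closure (M : Set H) := by
      have := closure_mono hKM hyK
      rwa [closure_closure] at this
    -- sequence in M converging to A w
    obtain ⟨u, huM, hulim⟩ := mem_closure_iff_seq_limit.mp hyM
    -- choose preimages
    choose v hvK hvA using huM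
    -- B u n = v n, converge
    have hBlim : Filter.Tendsto (fun n => B (u n)) Filter.atTop (nhds (B (A ⟨w, hw⟩))) :=
      (B.continuous.tendsto _).comp hulim
    have hBu : ∀ n, B (u n) = (v n : H) := by
      intro n
      rw [← hvA n]
      exact hBA (v n) (v n).2
    have hBAw : B (A ⟨w, hw⟩) = w := hBA w hw
    have hvlim : Filter.Tendsto (fun n => ((v n : H))) Filter.atTop (nhds w) := by
      rw [← hBAw]
      simpa only [hBu] using hBlim
    -- w ∈ closure K
    have hwcl : w ∈ closure (K : Set H) :=
      mem_closure_of_tendsto hvlim (Filter.Eventually.of_forall (fun n => (hvK n)))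
    -- w ∈ Kᗮᗮ = closure K
    have hKcc : w ∈ Kᗮᗮ := by
      rw [Submodule.orthogonal_orthogonal_eq_closure]
      exact hwcl
    have hw0 : w = 0 := by
      have := (Submodule.mem_orthogonal _ _).mp hKcc w hwperp
      simpa [inner_self_eq_zero] using this
    subst hw0
    have : (⟨(0:H), hw⟩ : A.domain) = 0 := rfl
    rw [this]
    exact A.toFun.map_zero
  · rintro rfl
    refine ⟨subset_closure K.zero_mem, 0, A.domain.zero_mem, (Kᗮ).zero_mem, ?_⟩
    have : (⟨(0:H), A.domain.zero_mem⟩ : A.domain) = 0 := rfl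
    rw [this]
    exact A.toFun.map_zero
end

section
/- Let A be a self-adjoint operator on a Hilbert space H and let g be a bounded vector for A, i.e. g ∈ ∩ₖ D(Aᵏ) with ‖Aⁿg‖ ≤ B_gⁿ for all n and some constant B_g > 0. Then the pair (A,g) satisfies the Krylov-core condition: K(A,g) is dense in closure(K(A,g)) ∩ D(A) in the graph norm ‖h‖_A = (‖h‖² + ‖Ah‖²)^{1/2}. Consequently A is K(A,g)-reduced in the generalised sense. -/
/-!
For `x` in the Krylov space `K = span {Aᵏ g}`, symmetry of `A` gives
`‖Aⁿ⁺¹x‖² = ⟪Aⁿx, Aⁿ⁺²x⟫ ≤ ‖Aⁿx‖ ‖Aⁿ⁺²x‖`, so `n ↦ ‖Aⁿx‖` is log-convex, while the bound on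
`‖Aᵏg‖` makes it grow at most like `Bⁿ`. Log-convexity forces `‖Ax‖ ≤ B ‖x‖`, so `A` is bounded on
`K` and maps `K` into itself. A sequence of `K` converging to `x ∈ closure K ∩ D(A)` therefore has a
Cauchy image under `A`, whose limit is `Ax` because a self-adjoint operator is closed; and
`A K ⊆ K` passes to `K^⊥ ∩ D(A)` by symmetry.
-/

open Filter Topology Finsupp
open scoped InnerProductSpace

section LogConvex

variable {a : ℕ → ℝ}

theorem mul_le_mul_succ_of_sq_le_mul (ha : ∀ n, 0 ≤ a n)
    (hconv : ∀ n, a (n + 1) ^ 2 ≤ a n * a (n + 2)) (n : ℕ) :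
    a 1 * a n ≤ a 0 * a (n + 1) := by
  induction n with
  | zero => rw [mul_comm]
  | succ n ih =>
    rcases (ha (n + 1)).eq_or_lt with h | h
    · rw [← h, mul_zero]
      exact mul_nonneg (ha 0) (ha (n + 2))
    · refine le_of_mul_le_mul_right ?_ h
      calc a 1 * a (n + 1) * a (n + 1) = a 1 * a (n + 1) ^ 2 := by ring
        _ ≤ a 1 * (a n * a (n + 2)) := mul_le_mul_of_nonneg_left (hconv n) (ha 1)
        _ = a 1 * a n * a (n + 2) := by ring
        _ ≤ a 0 * a (n + 1) * a (n + 2) := mul_le_mul_of_nonneg_right ih (ha (n + 2))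
        _ = a 0 * a (n + 2) * a (n + 1) := by ring

theorem pow_succ_le_pow_mul_of_sq_le_mul (ha : ∀ n, 0 ≤ a n)
    (hconv : ∀ n, a (n + 1) ^ 2 ≤ a n * a (n + 2)) (n : ℕ) :
    a 1 ^ (n + 1) ≤ a 0 ^ n * a (n + 1) := by
  induction n with
  | zero => simp
  | succ n ih =>
    calc a 1 ^ (n + 2) = a 1 ^ (n + 1) * a 1 := pow_succ _ _
      _ ≤ a 0 ^ n * a (n + 1) * a 1 := mul_le_mul_of_nonneg_right ih (ha 1)
      _ = a 0 ^ n * (a 1 * a (n + 1)) := by ring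
      _ ≤ a 0 ^ n * (a 0 * a (n + 2)) := mul_le_mul_of_nonneg_left
          (mul_le_mul_succ_of_sq_le_mul ha hconv (n + 1)) (pow_nonneg (ha 0) n)
      _ = a 0 ^ (n + 1) * a (n + 2) := by ring

/-- The ratios `a (n + 1) / a n` of a log-convex sequence increase, so they cannot exceed the
growth rate `B`. -/
theorem le_mul_of_sq_le_mul_of_le_mul_pow (ha : ∀ n, 0 ≤ a n)
    (hconv : ∀ n, a (n + 1) ^ 2 ≤ a n * a (n + 2)) {B C : ℝ} (hB : 0 < B)
    (hbound : ∀ n, a n ≤ C * B ^ n) : a 1 ≤ B * a 0 := by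
  rcases (ha 0).eq_or_lt with h0 | h0
  · have h1 : a 1 ^ 2 ≤ 0 := by simpa [← h0] using hconv 0
    rw [← h0, mul_zero]
    nlinarith [ha 1]
  by_contra! hlt
  have hBa : 0 < B * a 0 := mul_pos hB h0
  set r := a 1 / (B * a 0)
  have hr : 1 < r := (one_lt_div hBa).mpr hlt
  have hpow : ∀ n, r ^ (n + 1) ≤ C / a 0 := fun n => by
    rw [div_pow, div_le_div_iff₀ (pow_pos hBa _) h0]
    calc a 1 ^ (n + 1) * a 0 ≤ a 0 ^ n * a (n + 1) * a 0 :=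
          mul_le_mul_of_nonneg_right (pow_succ_le_pow_mul_of_sq_le_mul ha hconv n) (ha 0)
      _ ≤ a 0 ^ n * (C * B ^ (n + 1)) * a 0 := by gcongr; exact hbound _
      _ = C * (B * a 0) ^ (n + 1) := by ring
  obtain ⟨n, hn⟩ := pow_unbounded_of_one_lt (C / a 0) hr
  exact (hn.trans_le (pow_le_pow_right₀ hr.le n.le_succ)).not_ge (hpow n)

end LogConvex

theorem LinearPMap.IsClosed.apply_eq_of_tendsto {R E F ι : Type*} [CommRing R]
    [AddCommGroup E] [Module R E]
    [TopologicalSpace E] [AddCommGroup F] [Module R F] [TopologicalSpace F]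
    {A : E →ₗ.[R] F} (hA : A.IsClosed) {l : Filter ι} [l.NeBot] {u : ι → A.domain}
    {x : A.domain} {y : F} (hu : Tendsto (fun j => (u j : E)) l (𝓝 x))
    (hAu : Tendsto (fun j => A (u j)) l (𝓝 y)) : A x = y := by
  obtain ⟨z, hzx, hzy⟩ := (mem_graph_iff A).mp <|
    hA.mem_of_tendsto (hu.prodMk_nhds hAu) (Eventually.of_forall fun j => A.mem_graph (u j))
  exact (Subtype.ext hzx : z = x) ▸ hzy

theorem LinearPMap.IsClosed.exists_seq_tendsto_of_norm_apply_le {𝕜 E F : Type*}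
    [NontriviallyNormedField 𝕜] [NormedAddCommGroup E] [NormedSpace 𝕜 E]
    [NormedAddCommGroup F] [NormedSpace 𝕜 F] [CompleteSpace F]
    {A : E →ₗ.[𝕜] F} (hA : A.IsClosed) {p : Submodule 𝕜 E} (hp : p ≤ A.domain) {B : ℝ}
    (hbound : ∀ x : A.domain, (x : E) ∈ p → ‖A x‖ ≤ B * ‖(x : E)‖) (x : A.domain)
    (hx : (x : E) ∈ _root_.closure (p : Set E)) :
    ∃ u : ℕ → A.domain, (∀ j, (u j : E) ∈ p) ∧ Tendsto (fun j => (u j : E)) atTop (𝓝 x) ∧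
      Tendsto (fun j => A (u j)) atTop (𝓝 (A x)) := by
  obtain ⟨v, hvp, hv⟩ := mem_closure_iff_seq_limit.mp hx
  let f : p →L[𝕜] F := (A.toFun ∘ₗ Submodule.inclusion hp).mkContinuous B
    fun y => hbound _ y.2
  have hcauchy : CauchySeq fun j => (⟨v j, hvp j⟩ : p) :=
    isUniformEmbedding_subtype_val.isUniformInducing.cauchy_map_iff.mp hv.cauchySeq
  obtain ⟨y, hy⟩ := cauchySeq_tendsto_of_complete (f.uniformContinuous.comp_cauchySeq hcauchy)
  refine ⟨fun j => ⟨v j, hp (hvp j)⟩, hvp, hv, ?_⟩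
  exact hA.apply_eq_of_tendsto hv hy ▸ hy

section Orbit

variable {𝕜 E : Type*} [RCLike 𝕜] [NormedAddCommGroup E] [InnerProductSpace 𝕜 E]
  {A : E →ₗ.[𝕜] E}

theorem LinearPMap.IsFormalAdjoint.sq_norm_succ_le (hA : A.IsFormalAdjoint A)
    {v : ℕ → A.domain} (hv : ∀ n, A (v n) = v (n + 1)) (n : ℕ) :
    ‖(v (n + 1) : E)‖ ^ 2 ≤ ‖(v n : E)‖ * ‖(v (n + 2) : E)‖ :=
  calc ‖(v (n + 1) : E)‖ ^ 2 = ‖⟪(v (n + 1) : E), v (n + 1)⟫_𝕜‖ :=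
        (inner_self_eq_norm_sq _).symm.trans (inner_self_re_eq_norm _)
    _ = ‖⟪(v n : E), v (n + 2)⟫_𝕜‖ := by nth_rw 1 [← hv n]; rw [hA, hv]
    _ ≤ ‖(v n : E)‖ * ‖(v (n + 2) : E)‖ := norm_inner_le_norm _ _

variable {ψ : ℕ → E} (hmem : ∀ k, ψ k ∈ A.domain)

/-- `orbitCombination hmem c n` is `Aⁿ (∑ₖ cₖ ψₖ)` when `ψ` is an orbit of `A`. -/
noncomputable def orbitCombination (c : ℕ →₀ 𝕜) (n : ℕ) : A.domain :=
  linearCombination 𝕜 (fun k => (⟨ψ (k + n), hmem (k + n)⟩ : A.domain)) c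

theorem coe_orbitCombination (c : ℕ →₀ 𝕜) (n : ℕ) :
    (orbitCombination hmem c n : E) = linearCombination 𝕜 (fun k => ψ (k + n)) c :=
  apply_linearCombination 𝕜 A.domain.subtype _ c

theorem apply_orbitCombination (hstep : ∀ k, A ⟨ψ k, hmem k⟩ = ψ (k + 1)) (c : ℕ →₀ 𝕜)
    (n : ℕ) : A (orbitCombination hmem c n) = orbitCombination hmem c (n + 1) := by
  rw [coe_orbitCombination]
  exact (apply_linearCombination 𝕜 A.toFun _ c).trans
    (congrArg (linearCombination 𝕜 · c) (funext fun k => hstep (k + n)))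

theorem orbitCombination_mem_span (c : ℕ →₀ 𝕜) (n : ℕ) :
    (orbitCombination hmem c n : E) ∈ Submodule.span 𝕜 (Set.range ψ) := by
  rw [coe_orbitCombination]
  refine Submodule.span_mono ?_
    (range_linearCombination 𝕜 (v := fun k => ψ (k + n)) ▸ LinearMap.mem_range_self _ c)
  exact Set.range_comp_subset_range _ ψ

theorem norm_orbitCombination_le {B : ℝ} (hbdd : ∀ n : ℕ, ‖ψ n‖ ≤ B ^ n) (c : ℕ →₀ 𝕜)
    (n : ℕ) : ‖(orbitCombination hmem c n : E)‖ ≤ (c.sum fun k z => ‖z‖ * B ^ k) * B ^ n := by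
  rw [coe_orbitCombination, linearCombination_apply, Finsupp.sum, Finsupp.sum, Finset.sum_mul]
  refine (norm_sum_le _ _).trans (Finset.sum_le_sum fun k _ => ?_)
  rw [norm_smul, mul_assoc, ← pow_add]
  exact mul_le_mul_of_nonneg_left (hbdd _) (norm_nonneg _)

theorem exists_orbitCombination_eq {x : A.domain}
    (hx : (x : E) ∈ Submodule.span 𝕜 (Set.range ψ)) : ∃ c, orbitCombination hmem c 0 = x := by
  obtain ⟨c, hc⟩ : ∃ c, linearCombination 𝕜 ψ c = x := by
    rwa [← LinearMap.mem_range, range_linearCombination]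
  exact ⟨c, Subtype.ext ((coe_orbitCombination hmem c 0).trans hc)⟩

theorem LinearPMap.apply_mem_span_of_mem_span (hstep : ∀ k, A ⟨ψ k, hmem k⟩ = ψ (k + 1))
    (x : A.domain) (hx : (x : E) ∈ Submodule.span 𝕜 (Set.range ψ)) :
    A x ∈ Submodule.span 𝕜 (Set.range ψ) := by
  obtain ⟨c, rfl⟩ := exists_orbitCombination_eq hmem hx
  rw [apply_orbitCombination hmem hstep]
  exact orbitCombination_mem_span hmem c 1

theorem LinearPMap.IsFormalAdjoint.norm_apply_le_of_mem_span (hA : A.IsFormalAdjoint A)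
    (hstep : ∀ k, A ⟨ψ k, hmem k⟩ = ψ (k + 1)) {B : ℝ} (hB : 0 < B)
    (hbdd : ∀ n : ℕ, ‖ψ n‖ ≤ B ^ n) (x : A.domain)
    (hx : (x : E) ∈ Submodule.span 𝕜 (Set.range ψ)) : ‖A x‖ ≤ B * ‖(x : E)‖ := by
  obtain ⟨c, rfl⟩ := exists_orbitCombination_eq hmem hx
  rw [apply_orbitCombination hmem hstep]
  exact le_mul_of_sq_le_mul_of_le_mul_pow (fun _ => norm_nonneg _)
    (hA.sq_norm_succ_le (apply_orbitCombination hmem hstep c)) hB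
    (norm_orbitCombination_le hmem hbdd c)

end Orbit

theorem LinearPMap.IsFormalAdjoint.apply_mem_orthogonal {𝕜 E : Type*} [RCLike 𝕜]
    [NormedAddCommGroup E] [InnerProductSpace 𝕜 E] {A : E →ₗ.[𝕜] E}
    (hA : A.IsFormalAdjoint A) {p : Submodule 𝕜 E} (hp : p ≤ A.domain)
    (hAp : ∀ x : A.domain, (x : E) ∈ p → A x ∈ p) (x : A.domain) (hx : (x : E) ∈ pᗮ) :
    A x ∈ pᗮ := by
  rw [Submodule.mem_orthogonal] at hx ⊢
  intro w hw
  rw [← hA ⟨w, hp hw⟩ x]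
  exact hx _ (hAp ⟨w, hp hw⟩ hw)

theorem stmt18_general {H : Type*} [NormedAddCommGroup H] [InnerProductSpace ℂ H] [CompleteSpace H]
    (A : H →ₗ.[ℂ] H)
    (hsa : A.adjoint = A)
    (ψ : ℕ → H)
    (hmem : ∀ k, ψ k ∈ A.domain)
    (hstep : ∀ k, A ⟨ψ k, hmem k⟩ = ψ (k + 1))
    (B : ℝ) (hB : 0 < B) (hbdd : ∀ n : ℕ, ‖ψ n‖ ≤ B ^ n) :
    (∀ x : H, ∀ hx : x ∈ A.domain,
        x ∈ closure ((Submodule.span ℂ (Set.range ψ)) : Set H) →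
        (x, A ⟨x, hx⟩) ∈ closure {p : H × H | ∃ hp : p.1 ∈ A.domain,
            p.1 ∈ Submodule.span ℂ (Set.range ψ) ∧ A ⟨p.1, hp⟩ = p.2})
    ∧ (∀ x : H, ∀ hx : x ∈ A.domain,
        x ∈ closure ((Submodule.span ℂ (Set.range ψ)) : Set H) →
        A ⟨x, hx⟩ ∈ closure ((Submodule.span ℂ (Set.range ψ)) : Set H))
    ∧ (∀ x : H, ∀ hx : x ∈ A.domain,
        x ∈ (Submodule.span ℂ (Set.range ψ))ᗮ →
        A ⟨x, hx⟩ ∈ (Submodule.span ℂ (Set.range ψ))ᗮ) := by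
  have hA : IsSelfAdjoint A := hsa
  have hsym : A.IsFormalAdjoint A := by
    simpa only [hsa] using LinearPMap.adjoint_isFormalAdjoint hA.dense_domain
  have hK : Submodule.span ℂ (Set.range ψ) ≤ A.domain :=
    Submodule.span_le.mpr (Set.range_subset_iff.mpr hmem)
  have hAK := LinearPMap.apply_mem_span_of_mem_span hmem hstep
  have happrox := hA.isClosed.exists_seq_tendsto_of_norm_apply_le hK
    (hsym.norm_apply_le_of_mem_span hmem hstep hB hbdd)
  refine ⟨fun x hx hxK => ?_, fun x hx hxK => ?_,
    fun x hx => hsym.apply_mem_orthogonal hK hAK ⟨x, hx⟩⟩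
  · obtain ⟨u, huK, hu, hAu⟩ := happrox ⟨x, hx⟩ hxK
    exact mem_closure_of_tendsto (hu.prodMk_nhds hAu)
      (Eventually.of_forall fun j => ⟨(u j).2, huK j, rfl⟩)
  · obtain ⟨u, huK, -, hAu⟩ := happrox ⟨x, hx⟩ hxK
    exact mem_closure_of_tendsto hAu (Eventually.of_forall fun j => hAK (u j) (huK j))

/-- If `A` is self-adjoint and `g` is a bounded vector for `A` (`‖Aⁿg‖ ≤ B^n`, orbit
`ψ k = Aᵏg`), then the pair `(A,g)` satisfies the Krylov-core condition (graph-norm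
density of `K(A,g)` in `closure(K(A,g)) ∩ D(A)`), and consequently `A` is
`K(A,g)`-reduced in the generalised sense: `A` maps `closure(K(A,g)) ∩ D(A)` into
`closure(K(A,g))` and `K(A,g)^⊥ ∩ D(A)` into `K(A,g)^⊥`. -/
theorem stmt18 {H : Type*} [NormedAddCommGroup H] [InnerProductSpace ℂ H] [CompleteSpace H]
    (A : H →ₗ.[ℂ] H) (hdense : Dense (A.domain : Set H))
    (hsa : A.adjoint = A)
    (g : H) (ψ : ℕ → H) (hψ0 : ψ 0 = g)
    (hmem : ∀ k, ψ k ∈ A.domain)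
    (hstep : ∀ k, A ⟨ψ k, hmem k⟩ = ψ (k + 1))
    (B : ℝ) (hB : 0 < B) (hbdd : ∀ n : ℕ, ‖ψ n‖ ≤ B ^ n) :
    (∀ x : H, ∀ hx : x ∈ A.domain,
        x ∈ closure ((Submodule.span ℂ (Set.range ψ)) : Set H) →
        (x, A ⟨x, hx⟩) ∈ closure {p : H × H | ∃ hp : p.1 ∈ A.domain,
            p.1 ∈ Submodule.span ℂ (Set.range ψ) ∧ A ⟨p.1, hp⟩ = p.2})
    ∧ (∀ x : H, ∀ hx : x ∈ A.domain,
        x ∈ closure ((Submodule.span ℂ (Set.range ψ)) : Set H) →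
        A ⟨x, hx⟩ ∈ closure ((Submodule.span ℂ (Set.range ψ)) : Set H))
    ∧ (∀ x : H, ∀ hx : x ∈ A.domain,
        x ∈ (Submodule.span ℂ (Set.range ψ))ᗮ →
        A ⟨x, hx⟩ ∈ (Submodule.span ℂ (Set.range ψ))ᗮ) :=
  stmt18_general A hsa ψ hmem hstep B hB hbdd
end

section
/- Let A be a self-adjoint operator on a Hilbert space H and g a bounded vector for A (‖Aⁿg‖ ≤ B_gⁿ for all n). Then the map h ↦ h(A)g extends to a unitary isomorphism from L²(ℝ, dμ_g^{(A)}) onto closure(K(A,g)), where μ_g^{(A)} is the scalar spectral measure of A at g. In particular, if additionally A is injective and g ∈ ran A, then the unique solution f to Af = g satisfies f = h(A)g with h(λ) = 1/λ ∈ L²(ℝ, dμ_g^{(A)}), hence f ∈ closure(K(A,g)). -/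
/-!
Self-adjointness turns the Gram matrix of the orbit `ψ k = Aᵏ g` into a Hankel matrix of moments,
`⟪ψ j, ψ k⟫ = ∫ λ^(j+k) dμ`, so `p ↦ p(A) g` is isometric from polynomials in `L²(μ)` onto the
Krylov space. The growth bound `‖ψ n‖ ≤ Bⁿ` bounds the even moments by `B^(2n)`, which confines
`μ` to `[-|B|, |B|]` (Chebyshev), and there polynomials are dense in `L²(μ)` by Weierstrass; so
the isometry extends to a unitary `U` onto the closed Krylov space. `U` intertwines
multiplication by `λ` with `A`, and `w = U* f` satisfies `λ w = 1` because
`⟪λ w, p⟫ = ⟪f, A p(A) g⟫ = ⟪g, p(A) g⟫ = ⟪1, p⟫`. Hence `A (U w) = g = A f`, and injectivity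
gives `U w = f`.
-/

open MeasureTheory Polynomial Filter Topology
open scoped ComplexConjugate InnerProductSpace

section SelfAdjoint

variable {𝕜 E : Type*} [RCLike 𝕜] [NormedAddCommGroup E] [InnerProductSpace 𝕜 E] [CompleteSpace E]
  {A : E →ₗ.[𝕜] E}

theorem IsSelfAdjoint.isFormalAdjoint (hA : IsSelfAdjoint A) : A.IsFormalAdjoint A := by
  have h := LinearPMap.adjoint_isFormalAdjoint hA.dense_domain
  rwa [LinearPMap.isSelfAdjoint_def.mp hA] at h

theorem IsSelfAdjoint.exists_apply_eq_of_inner_eq (hA : IsSelfAdjoint A) {y z : E}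
    (h : ∀ x : A.domain, ⟪z, (x : E)⟫_𝕜 = ⟪y, A x⟫_𝕜) : ∃ hy : y ∈ A.domain, A ⟨y, hy⟩ = z := by
  have hy : y ∈ A.adjoint.domain := LinearPMap.mem_adjoint_domain_of_exists y ⟨z, h⟩
  have hle : A.adjoint ≤ A := le_of_eq hA
  exact ⟨hle.1 hy, (hle.2 rfl).symm.trans (LinearPMap.adjoint_apply_eq hA.dense_domain ⟨y, hy⟩ h)⟩

end SelfAdjoint

section Krylov

variable {R M : Type*} [Ring R] [AddCommGroup M] [Module R M] (ψ : ℕ → M)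

noncomputable def krylovMap : R[X] →ₗ[R] M :=
  lsum fun k => LinearMap.toSpanSingleton R M (ψ k)

theorem krylovMap_apply (p : R[X]) :
    krylovMap ψ p = ∑ k ∈ Finset.range (p.natDegree + 1), p.coeff k • ψ k := by
  simp only [krylovMap, lsum_apply, LinearMap.toSpanSingleton_apply]
  exact sum_over_range p fun _ => zero_smul R _

theorem krylovMap_monomial (k : ℕ) (c : R) : krylovMap ψ (monomial k c) = c • ψ k := by
  simp [krylovMap, sum_monomial_index]

theorem krylovMap_one : krylovMap ψ (1 : R[X]) = ψ 0 := by
  rw [← C_1, ← monomial_zero_left, krylovMap_monomial, one_smul]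

theorem range_krylovMap : LinearMap.range (krylovMap ψ) = Submodule.span R (Set.range ψ) := by
  apply le_antisymm
  · rintro _ ⟨p, rfl⟩
    rw [krylovMap_apply]
    exact Submodule.sum_mem _ fun k _ => Submodule.smul_mem _ _ (Submodule.subset_span ⟨k, rfl⟩)
  · rw [Submodule.span_le]
    rintro _ ⟨k, rfl⟩
    exact ⟨monomial k 1, by rw [krylovMap_monomial, one_smul]⟩

variable {ψ} {A : M →ₗ.[R] M}

theorem krylovMap_mem_domain (hmem : ∀ k, ψ k ∈ A.domain) (p : R[X]) :
    krylovMap ψ p ∈ A.domain := by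
  rw [krylovMap_apply]
  exact Submodule.sum_mem _ fun k _ => Submodule.smul_mem _ _ (hmem k)

theorem apply_krylovMap (hmem : ∀ k, ψ k ∈ A.domain)
    (hstep : ∀ k, A ⟨ψ k, hmem k⟩ = ψ (k + 1)) (p : R[X]) :
    A ⟨krylovMap ψ p, krylovMap_mem_domain hmem p⟩ = krylovMap ψ (X * p) := by
  induction p using Polynomial.induction_on' with
  | add p q hp hq =>
    have hsplit : (⟨krylovMap ψ (p + q), krylovMap_mem_domain hmem (p + q)⟩ : A.domain) =
        ⟨_, krylovMap_mem_domain hmem p⟩ + ⟨_, krylovMap_mem_domain hmem q⟩ :=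
      Subtype.ext (map_add _ _ _)
    rw [hsplit, LinearPMap.map_add, hp, hq, mul_add, map_add]
  | monomial k c =>
    have hsmul : (⟨krylovMap ψ (monomial k c), krylovMap_mem_domain hmem _⟩ : A.domain) =
        c • ⟨ψ k, hmem k⟩ :=
      Subtype.ext (krylovMap_monomial ψ k c)
    rw [hsmul, LinearPMap.map_smul, hstep, X_mul_monomial, krylovMap_monomial]

theorem orbit_zero_eq_zero (hmem : ∀ k, ψ k ∈ A.domain)
    (hstep : ∀ k, A ⟨ψ k, hmem k⟩ = ψ (k + 1))
    (hinj : ∀ (x : M) (hx : x ∈ A.domain), A ⟨x, hx⟩ = 0 → x = 0)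
    {n : ℕ} (h : ψ n = 0) : ψ 0 = 0 := by
  induction n with
  | zero => exact h
  | succ n ih => exact ih (hinj _ (hmem n) (by rw [hstep, h]))

end Krylov

theorem inner_orbit_eq_inner_zero_add {𝕜 E : Type*} [RCLike 𝕜] [NormedAddCommGroup E]
    [InnerProductSpace 𝕜 E] {A : E →ₗ.[𝕜] E} (hA : A.IsFormalAdjoint A) {ψ : ℕ → E}
    (hmem : ∀ k, ψ k ∈ A.domain)
    (hstep : ∀ k, A ⟨ψ k, hmem k⟩ = ψ (k + 1)) (j k : ℕ) :
    ⟪ψ j, ψ k⟫_𝕜 = ⟪ψ 0, ψ (j + k)⟫_𝕜 := by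
  induction j generalizing k with
  | zero => rw [zero_add]
  | succ j ih =>
    rw [← hstep j, hA ⟨ψ j, hmem j⟩ ⟨ψ k, hmem k⟩, hstep k, ih, add_right_comm, add_assoc]

section Moments

variable {μ : Measure ℝ} [IsFiniteMeasure μ]

-- A non-integrable function has Bochner integral `0`, so a moment identity alone does not give
-- integrability.
theorem integrable_pow_two_mul_of_integral_eq {a : ℕ → ℝ}
    (ha : ∀ n, ∫ x, x ^ (2 * n) ∂μ = a n) (h0 : ∀ n, a n = 0 → a 0 = 0) (n : ℕ) :
    Integrable (fun x : ℝ => x ^ (2 * n)) μ := by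
  by_cases hn : a n = 0
  · have hμ : μ = 0 := by
      have h := ha 0
      simp only [mul_zero, pow_zero, integral_const, smul_eq_mul, mul_one, h0 n hn] at h
      exact Measure.measure_univ_eq_zero.mp ((measureReal_eq_zero_iff).mp h)
    simp [hμ]
  · exact Integrable.of_integral_ne_zero (by rwa [ha])

theorem ae_abs_le_of_integral_pow_two_mul_le {B C : ℝ}
    (hint : ∀ n, Integrable (fun x : ℝ => x ^ (2 * n)) μ)
    (hmom : ∀ n, ∫ x, x ^ (2 * n) ∂μ ≤ C * B ^ (2 * n)) : ∀ᵐ x ∂μ, |x| ≤ |B| := by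
  have hlt : ∀ c, |B| < c → ∀ᵐ x ∂μ, |x| < c := by
    intro c hc
    have hc0 : 0 < c := (abs_nonneg B).trans_lt hc
    have hbound : ∀ n, μ.real {x | c ≤ |x|} ≤ C * ((|B| / c) ^ 2) ^ n := by
      intro n
      have hsub : {x : ℝ | c ≤ |x|} ⊆ {x | c ^ (2 * n) ≤ x ^ (2 * n)} := fun x hx => by
        simpa only [Set.mem_ofPred_eq, (even_two_mul n).pow_abs] using
          pow_le_pow_left₀ hc0.le hx (2 * n)
      calc μ.real {x | c ≤ |x|} ≤ μ.real {x | c ^ (2 * n) ≤ x ^ (2 * n)} := measureReal_mono hsub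
        _ ≤ (∫ x, x ^ (2 * n) ∂μ) / c ^ (2 * n) := by
          rw [le_div_iff₀' (by positivity)]
          exact mul_meas_ge_le_integral_of_nonneg
            (ae_of_all _ fun x => (even_two_mul n).pow_nonneg x) (hint n) _
        _ ≤ C * B ^ (2 * n) / c ^ (2 * n) := by gcongr; exact hmom n
        _ = C * ((|B| / c) ^ 2) ^ n := by
          rw [← pow_mul, div_pow, (even_two_mul n).pow_abs, mul_div_assoc]
    have hr : (|B| / c) ^ 2 < 1 := pow_lt_one₀ (by positivity) ((div_lt_one hc0).2 hc) two_ne_zero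
    have hlim : Tendsto (fun n : ℕ => C * ((|B| / c) ^ 2) ^ n) atTop (𝓝 0) := by
      simpa using (tendsto_pow_atTop_nhds_zero_of_lt_one (by positivity) hr).const_mul C
    have hzero : μ.real {x | c ≤ |x|} = 0 :=
      le_antisymm (ge_of_tendsto' hlim hbound) measureReal_nonneg
    rw [ae_iff]
    simpa only [not_lt] using (measureReal_eq_zero_iff).mp hzero
  have hall : ∀ᵐ x ∂μ, ∀ k : ℕ, |x| < |B| + 1 / (k + 1) :=
    ae_all_iff.2 fun k => hlt _ (lt_add_of_pos_right _ Nat.one_div_pos_of_nat)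
  filter_upwards [hall] with x hx
  refine le_of_forall_pos_lt_add fun ε hε => ?_
  obtain ⟨k, hk⟩ := exists_nat_one_div_lt hε
  linarith [hx k]

end Moments

theorem exists_complex_polynomial_near_of_continuousOn {a b : ℝ} {F : ℝ → ℂ}
    (hF : ContinuousOn F (Set.Icc a b)) {ε : ℝ} (hε : 0 < ε) :
    ∃ P : ℂ[X], ∀ x ∈ Set.Icc a b, ‖F x - P.eval (x : ℂ)‖ < ε := by
  obtain ⟨p, hp⟩ := exists_polynomial_near_of_continuousOn a b _
    (Complex.continuous_re.comp_continuousOn hF) (ε / 2) (half_pos hε)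
  obtain ⟨q, hq⟩ := exists_polynomial_near_of_continuousOn a b _
    (Complex.continuous_im.comp_continuousOn hF) (ε / 2) (half_pos hε)
  refine ⟨p.map Complex.ofRealHom + C Complex.I * q.map Complex.ofRealHom, fun x hx => ?_⟩
  have hre (r : ℝ[X]) : (r.map Complex.ofRealHom).eval (x : ℂ) = ((r.eval x : ℝ) : ℂ) := by
    rw [eval_map, ← Complex.ofRealHom_eq_coe, eval₂_at_apply, Complex.ofRealHom_eq_coe]
  calc ‖F x - (p.map Complex.ofRealHom + C Complex.I * q.map Complex.ofRealHom).eval (x : ℂ)‖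
      ≤ |(F x).re - p.eval x| + |(F x).im - q.eval x| := by
        simpa [hre] using Complex.norm_le_abs_re_add_abs_im
          (F x - (p.map Complex.ofRealHom + C Complex.I * q.map Complex.ofRealHom).eval (x : ℂ))
    _ < ε := by
        rw [abs_sub_comm, abs_sub_comm (F x).im]
        have hpx := hp x hx
        have hqx := hq x hx
        simp only [Function.comp_apply] at hpx hqx
        linarith

theorem Continuous.memLp_of_ae_abs_le {E : Type*} [NormedAddCommGroup E] {F : ℝ → E}
    (hF : Continuous F) {μ : Measure ℝ} [IsFiniteMeasure μ] {R : ℝ} (hR : ∀ᵐ x ∂μ, |x| ≤ R)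
    (p : ENNReal) : MemLp F p μ := by
  obtain ⟨C, hC⟩ :=
    isCompact_Icc.exists_bound_of_continuousOn (hF.continuousOn (s := Set.Icc (-R) R))
  exact MemLp.of_bound hF.aestronglyMeasurable C (hR.mono fun x hx => hC x (abs_le.mp hx))

section BoundedSupport

variable {μ : Measure ℝ} [IsFiniteMeasure μ] {R : ℝ} (hR : ∀ᵐ x ∂μ, |x| ≤ R)

noncomputable def polynomialToLp : ℂ[X] →ₗ[ℂ] Lp ℂ 2 μ where
  toFun p := ((p.continuous.comp Complex.continuous_ofReal).memLp_of_ae_abs_le hR 2).toLp _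
  map_add' p q := by
    simp only [← MemLp.toLp_add]
    exact MemLp.toLp_congr _ _ (ae_of_all _ fun x => eval_add)
  map_smul' c p := by
    simp only [RingHom.id_apply, ← MemLp.toLp_const_smul]
    exact MemLp.toLp_congr _ _ (ae_of_all _ fun x => by simp)

theorem polynomialToLp_ae_eq (p : ℂ[X]) :
    polynomialToLp hR p =ᵐ[μ] fun x => p.eval (x : ℂ) :=
  MemLp.coeFn_toLp ((p.continuous.comp Complex.continuous_ofReal).memLp_of_ae_abs_le hR 2)

theorem denseRange_polynomialToLp : DenseRange (polynomialToLp hR) := by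
  rw [Metric.denseRange_iff]
  intro v ε hε
  obtain ⟨b, hb, hvb⟩ := Metric.mem_closure_iff.mp
    (Lp.boundedContinuousFunction_dense ℂ μ (p := 2) ENNReal.ofNat_ne_top v) (ε / 2) (half_pos hε)
  obtain ⟨F, hF⟩ := Lp.mem_boundedContinuousFunction_iff.mp hb
  have hbF : ⇑b =ᵐ[μ] F := hF ▸ ContinuousMap.coeFn_toAEEqFun μ F.toContinuousMap
  set m : ℝ := (measureUnivNNReal μ : ℝ) ^ (2 : ENNReal).toReal⁻¹
  obtain ⟨P, hP⟩ := exists_complex_polynomial_near_of_continuousOn F.continuous.continuousOn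
    (show 0 < ε / 2 / (m + 1) by positivity) (a := -R) (b := R)
  have hbP : ‖b - polynomialToLp hR P‖ ≤ m * (ε / 2 / (m + 1)) := by
    refine Lp.norm_le_of_ae_bound (by positivity) ?_
    filter_upwards [hR, hbF, polynomialToLp_ae_eq hR P, Lp.coeFn_sub b (polynomialToLp hR P)]
      with x hx hbx hPx hsub
    rw [hsub, Pi.sub_apply, hbx, hPx]
    exact (hP x (abs_le.mp hx)).le
  have hmε : m * (ε / 2 / (m + 1)) ≤ ε / 2 := by
    rw [mul_div_left_comm]
    exact mul_le_of_le_one_right (by positivity) ((div_le_one (by positivity)).2 (by linarith))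
  refine ⟨P, ?_⟩
  calc dist v (polynomialToLp hR P) ≤ dist v b + dist b (polynomialToLp hR P) := dist_triangle _ _ _
    _ < ε / 2 + ε / 2 := add_lt_add_of_lt_of_le hvb (by rw [dist_eq_norm]; exact hbP.trans hmε)
    _ = ε := add_halves ε

noncomputable def mulX : Lp ℂ 2 μ →L[ℂ] Lp ℂ 2 μ :=
  (ContinuousLinearMap.mul ℂ ℂ).holderL μ ⊤ 2 2
    (MemLp.toLp (fun x : ℝ => (x : ℂ)) (Complex.continuous_ofReal.memLp_of_ae_abs_le hR ⊤))

theorem mulX_ae_eq (u : Lp ℂ 2 μ) : mulX hR u =ᵐ[μ] fun x => (x : ℂ) * u x := by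
  filter_upwards [ContinuousLinearMap.coeFn_holder (ContinuousLinearMap.mul ℂ ℂ) (r := 2)
    (MemLp.toLp (fun x : ℝ => (x : ℂ)) (Complex.continuous_ofReal.memLp_of_ae_abs_le hR ⊤)) u,
    MemLp.coeFn_toLp (Complex.continuous_ofReal.memLp_of_ae_abs_le hR ⊤)] with x h1 h2
  rw [mulX, ContinuousLinearMap.holderL_apply_apply, h1, ContinuousLinearMap.mul_apply', h2]

theorem mulX_polynomialToLp (p : ℂ[X]) :
    mulX hR (polynomialToLp hR p) = polynomialToLp hR (X * p) := by
  refine Lp.ext ?_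
  filter_upwards [mulX_ae_eq hR (polynomialToLp hR p), polynomialToLp_ae_eq hR p,
    polynomialToLp_ae_eq hR (X * p)] with x h1 h2 h3
  rw [h1, h2, h3, eval_mul, eval_X]

theorem inner_mulX_left (u v : Lp ℂ 2 μ) : ⟪mulX hR u, v⟫_ℂ = ⟪u, mulX hR v⟫_ℂ := by
  rw [L2.inner_def, L2.inner_def]
  refine integral_congr_ae ?_
  filter_upwards [mulX_ae_eq hR u, mulX_ae_eq hR v] with x hu hv
  simp only [hu, hv, RCLike.inner_apply, map_mul, Complex.conj_ofReal]
  ring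

theorem inner_polynomialToLp_monomial (j k : ℕ) (c d : ℂ) :
    ⟪polynomialToLp hR (monomial j c), polynomialToLp hR (monomial k d)⟫_ℂ =
      conj c * d * ∫ x, (x : ℂ) ^ (j + k) ∂μ := by
  rw [L2.inner_def, ← integral_const_mul]
  refine integral_congr_ae ?_
  filter_upwards [polynomialToLp_ae_eq hR (monomial j c), polynomialToLp_ae_eq hR (monomial k d)]
    with x hj hk
  simp only [hj, hk, eval_monomial, RCLike.inner_apply, map_mul, map_pow, Complex.conj_ofReal]
  ring

end BoundedSupport

section Isometry

variable {𝕜 V E F : Type*} [NontriviallyNormedField 𝕜] [AddCommGroup V] [Module 𝕜 V]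
  [NormedAddCommGroup E] [NormedSpace 𝕜 E] [NormedAddCommGroup F] [NormedSpace 𝕜 F]
  {Λ : V →ₗ[𝕜] E} {φ : V →ₗ[𝕜] F}

theorem exists_linearIsometry_comp_eq [CompleteSpace F] (hΛ : DenseRange Λ)
    (hφ : ∀ v, ‖φ v‖ = ‖Λ v‖) : ∃ U : E →ₗᵢ[𝕜] F, ∀ v, U (Λ v) = φ v := by
  have hker : LinearMap.ker Λ ≤ LinearMap.ker φ := fun v hv => by
    rw [LinearMap.mem_ker, ← norm_eq_zero, hφ, LinearMap.mem_ker.mp hv, norm_zero]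
  set ℓ : LinearMap.range Λ →ₗ[𝕜] F :=
    (LinearMap.ker Λ).liftQ φ hker ∘ₗ Λ.quotKerEquivRange.symm.toLinearMap
  have hℓ : ∀ v, ℓ ⟨Λ v, LinearMap.mem_range_self Λ v⟩ = φ v := fun v => by
    simp [ℓ, LinearMap.quotKerEquivRange_symm_apply_image]
  have hℓnorm : ∀ w, ‖ℓ w‖ = ‖w‖ := by
    rintro ⟨_, v, rfl⟩
    exact (congrArg norm (hℓ v)).trans (hφ v)
  set U := (ℓ.mkContinuous 1 fun w => by rw [hℓnorm, one_mul]).extend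
    (LinearMap.range Λ).subtypeL
  have hU : ∀ w : LinearMap.range Λ, U w = ℓ w :=
    ContinuousLinearMap.extend_eq _ (by simpa [DenseRange, Set.range] using hΛ)
      isUniformEmbedding_subtype_val.isUniformInducing
  have hUnorm : ∀ x, ‖U x‖ = ‖x‖ := fun x =>
    hΛ.induction_on x (isClosed_eq U.continuous.norm continuous_norm) fun v =>
      ((congrArg norm (hU ⟨Λ v, LinearMap.mem_range_self Λ v⟩)).trans (hℓnorm _))
  exact ⟨{ U.toLinearMap with norm_map' := hUnorm },
    fun v => (hU ⟨Λ v, LinearMap.mem_range_self Λ v⟩).trans (hℓ v)⟩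

theorem LinearIsometry.range_eq_topologicalClosure_range [CompleteSpace E] (U : E →ₗᵢ[𝕜] F)
    (hΛ : DenseRange Λ) (hU : ∀ v, U (Λ v) = φ v) :
    LinearMap.range U.toLinearMap = (LinearMap.range φ).topologicalClosure := by
  apply le_antisymm
  · rintro _ ⟨x, rfl⟩
    rw [← SetLike.mem_coe, Submodule.topologicalClosure_coe]
    exact hΛ.induction_on x (isClosed_closure.preimage U.continuous)
      fun v => subset_closure ⟨v, (hU v).symm⟩
  · refine Submodule.topologicalClosure_minimal _ ?_ U.isometry.isClosedEmbedding.isClosed_range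
    rintro _ ⟨v, rfl⟩
    exact ⟨Λ v, hU v⟩

theorem exists_linearIsometryEquiv_topologicalClosure_range [CompleteSpace E] [CompleteSpace F]
    (hΛ : DenseRange Λ) (hφ : ∀ v, ‖φ v‖ = ‖Λ v‖) :
    ∃ U : E ≃ₗᵢ[𝕜] (LinearMap.range φ).topologicalClosure, ∀ v, (U (Λ v) : F) = φ v := by
  obtain ⟨U, hU⟩ := exists_linearIsometry_comp_eq hΛ hφ
  exact ⟨U.equivRange.trans
    (LinearIsometryEquiv.ofEq _ _ (U.range_eq_topologicalClosure_range hΛ hU)), hU⟩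

end Isometry

section Spectral

variable {H : Type*} [NormedAddCommGroup H] [InnerProductSpace ℂ H] {ψ : ℕ → H} {μ : Measure ℝ}

theorem integral_pow_two_mul_eq_norm_sq
    (hgram : ∀ j k, ⟪ψ j, ψ k⟫_ℂ = ∫ x, (x : ℂ) ^ (j + k) ∂μ) (n : ℕ) :
    ∫ x, x ^ (2 * n) ∂μ = ‖ψ n‖ ^ 2 := by
  apply Complex.ofReal_injective
  rw [← integral_complex_ofReal]
  push_cast
  rw [two_mul, ← hgram]
  exact inner_self_eq_norm_sq_to_K _

variable [IsFiniteMeasure μ] {R : ℝ}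

theorem ae_abs_le_of_norm_orbit_le (hgram : ∀ j k, ⟪ψ j, ψ k⟫_ℂ = ∫ x, (x : ℂ) ^ (j + k) ∂μ)
    (hzero : ∀ n, ψ n = 0 → ψ 0 = 0) {B : ℝ} (hbdd : ∀ n, ‖ψ n‖ ≤ B ^ n) :
    ∀ᵐ x ∂μ, |x| ≤ |B| := by
  have hmom := integral_pow_two_mul_eq_norm_sq hgram
  refine ae_abs_le_of_integral_pow_two_mul_le (C := 1)
    (integrable_pow_two_mul_of_integral_eq hmom fun n hn => ?_) fun n => ?_
  · rw [hzero n (norm_eq_zero.mp ((pow_eq_zero_iff two_ne_zero).mp hn)), norm_zero,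
      zero_pow two_ne_zero]
  · rw [hmom, one_mul, pow_mul']
    exact pow_le_pow_left₀ (norm_nonneg _) (hbdd n) 2

theorem inner_krylovMap_eq_inner_polynomialToLp (hR : ∀ᵐ x ∂μ, |x| ≤ R)
    (hgram : ∀ j k, ⟪ψ j, ψ k⟫_ℂ = ∫ x, (x : ℂ) ^ (j + k) ∂μ) (p q : ℂ[X]) :
    ⟪krylovMap ψ p, krylovMap ψ q⟫_ℂ = ⟪polynomialToLp hR p, polynomialToLp hR q⟫_ℂ := by
  induction p using Polynomial.induction_on' with
  | add p₁ p₂ h₁ h₂ => simp only [map_add, inner_add_left, h₁, h₂]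
  | monomial j c =>
    induction q using Polynomial.induction_on' with
    | add q₁ q₂ h₁ h₂ => simp only [map_add, inner_add_right, h₁, h₂]
    | monomial k d =>
      rw [inner_polynomialToLp_monomial, krylovMap_monomial, krylovMap_monomial, inner_smul_left,
        inner_smul_right, hgram, mul_assoc]

theorem norm_krylovMap_eq_norm_polynomialToLp (hR : ∀ᵐ x ∂μ, |x| ≤ R)
    (hgram : ∀ j k, ⟪ψ j, ψ k⟫_ℂ = ∫ x, (x : ℂ) ^ (j + k) ∂μ) (p : ℂ[X]) :
    ‖krylovMap ψ p‖ = ‖polynomialToLp hR p‖ := by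
  rw [norm_eq_sqrt_re_inner (𝕜 := ℂ), norm_eq_sqrt_re_inner (𝕜 := ℂ),
    inner_krylovMap_eq_inner_polynomialToLp hR hgram]

variable [CompleteSpace H] {A : H →ₗ.[ℂ] H}

theorem exists_mem_domain_apply_eq_mulX (hA : IsSelfAdjoint A) (hmem : ∀ k, ψ k ∈ A.domain)
    (hstep : ∀ k, A ⟨ψ k, hmem k⟩ = ψ (k + 1)) (hR : ∀ᵐ x ∂μ, |x| ≤ R)
    (T : Lp ℂ 2 μ →L[ℂ] H) (hT : ∀ p, T (polynomialToLp hR p) = krylovMap ψ p) (u : Lp ℂ 2 μ) :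
    ∃ h : T u ∈ A.domain, A ⟨T u, h⟩ = T (mulX hR u) := by
  refine hA.exists_apply_eq_of_inner_eq fun x => ?_
  refine (denseRange_polynomialToLp hR).induction_on
    (p := fun u => ⟪T (mulX hR u), (x : H)⟫_ℂ = ⟪T u, A x⟫_ℂ) u
    (isClosed_eq ((T.continuous.comp (mulX hR).continuous).inner continuous_const)
      (T.continuous.inner continuous_const)) fun p => ?_
  rw [mulX_polynomialToLp, hT, hT, ← apply_krylovMap hmem hstep]
  exact hA.isFormalAdjoint ⟨_, krylovMap_mem_domain hmem p⟩ x

theorem mulX_adjoint_apply (hA : IsSelfAdjoint A) (hmem : ∀ k, ψ k ∈ A.domain)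
    (hstep : ∀ k, A ⟨ψ k, hmem k⟩ = ψ (k + 1)) (hR : ∀ᵐ x ∂μ, |x| ≤ R)
    (hgram : ∀ j k, ⟪ψ j, ψ k⟫_ℂ = ∫ x, (x : ℂ) ^ (j + k) ∂μ)
    (T : Lp ℂ 2 μ →L[ℂ] H) (hT : ∀ p, T (polynomialToLp hR p) = krylovMap ψ p)
    {f : H} (hf : f ∈ A.domain) (hAf : A ⟨f, hf⟩ = ψ 0) :
    mulX hR (T.adjoint f) = polynomialToLp hR 1 := by
  refine ext_inner_right ℂ fun v => (denseRange_polynomialToLp hR).induction_on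
    (p := fun v => ⟪mulX hR (T.adjoint f), v⟫_ℂ = ⟪polynomialToLp hR 1, v⟫_ℂ) v
    (isClosed_eq (continuous_const.inner continuous_id) (continuous_const.inner continuous_id))
    fun p => ?_
  calc ⟪mulX hR (T.adjoint f), polynomialToLp hR p⟫_ℂ
      = ⟪f, krylovMap ψ (X * p)⟫_ℂ := by
        rw [inner_mulX_left, mulX_polynomialToLp, ContinuousLinearMap.adjoint_inner_left, hT]
    _ = ⟪krylovMap ψ 1, krylovMap ψ p⟫_ℂ := by
        rw [← apply_krylovMap hmem hstep, ← hA.isFormalAdjoint ⟨f, hf⟩, hAf, krylovMap_one]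
    _ = ⟪polynomialToLp hR 1, polynomialToLp hR p⟫_ℂ :=
        inner_krylovMap_eq_inner_polynomialToLp hR hgram 1 p

theorem exists_ae_eq_inv_and_apply_eq (hA : IsSelfAdjoint A) (hmem : ∀ k, ψ k ∈ A.domain)
    (hstep : ∀ k, A ⟨ψ k, hmem k⟩ = ψ (k + 1))
    (hinj : ∀ (x : H) (hx : x ∈ A.domain), A ⟨x, hx⟩ = 0 → x = 0) (hR : ∀ᵐ x ∂μ, |x| ≤ R)
    (hgram : ∀ j k, ⟪ψ j, ψ k⟫_ℂ = ∫ x, (x : ℂ) ^ (j + k) ∂μ)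
    (T : Lp ℂ 2 μ →L[ℂ] H) (hT : ∀ p, T (polynomialToLp hR p) = krylovMap ψ p)
    {f : H} (hf : f ∈ A.domain) (hAf : A ⟨f, hf⟩ = ψ 0) :
    ∃ w : Lp ℂ 2 μ, (⇑w =ᵐ[μ] fun x => (x : ℂ)⁻¹) ∧ T w = f := by
  have hw := mulX_adjoint_apply hA hmem hstep hR hgram T hT hf hAf
  refine ⟨T.adjoint f, ?_, ?_⟩
  · have hw' : ⇑(mulX hR (T.adjoint f)) =ᵐ[μ] ⇑(polynomialToLp hR 1) := by rw [hw]
    filter_upwards [mulX_ae_eq hR (T.adjoint f), polynomialToLp_ae_eq hR 1, hw'] with x h1 h2 h3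
    rw [eval_one] at h2
    exact eq_inv_of_mul_eq_one_right (h1.symm.trans (h3.trans h2))
  · obtain ⟨hdom, hAw⟩ := exists_mem_domain_apply_eq_mulX hA hmem hstep hR T hT (T.adjoint f)
    rw [hw, hT, krylovMap_one, ← hAf] at hAw
    refine sub_eq_zero.mp (hinj _ (sub_mem hdom hf) ?_)
    rw [show (⟨_, sub_mem hdom hf⟩ : A.domain) = ⟨_, hdom⟩ - ⟨f, hf⟩ from rfl,
      LinearPMap.map_sub, hAw, sub_self]

end Spectral

theorem stmt19_general {H : Type*} [NormedAddCommGroup H] [InnerProductSpace ℂ H] [CompleteSpace H]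
    (A : H →ₗ.[ℂ] H)
    (hsa : A.adjoint = A)
    (g : H) (ψ : ℕ → H) (hψ0 : ψ 0 = g)
    (hmem : ∀ k, ψ k ∈ A.domain)
    (hstep : ∀ k, A ⟨ψ k, hmem k⟩ = ψ (k + 1))
    (B : ℝ) (hbdd : ∀ n : ℕ, ‖ψ n‖ ≤ B ^ n)
    (μ : Measure ℝ) [IsFiniteMeasure μ]
    (hμ : ∀ n : ℕ, ∫ x : ℝ, (x : ℂ) ^ n ∂μ = (inner ℂ g (ψ n) : ℂ))
    (hinj : ∀ (x : H) (hx : x ∈ A.domain), A ⟨x, hx⟩ = 0 → x = 0)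
    (f : H) (hf : f ∈ A.domain) (hAf : A ⟨f, hf⟩ = g) :
    ∃ U : Lp ℂ 2 μ ≃ₗᵢ[ℂ] (Submodule.span ℂ (Set.range ψ)).topologicalClosure,
      (∀ (p : Polynomial ℂ) (u : Lp ℂ 2 μ),
          (⇑u =ᵐ[μ] fun x : ℝ => p.eval (x : ℂ)) →
          ((U u : H) = ∑ k ∈ Finset.range (p.natDegree + 1), p.coeff k • ψ k))
      ∧ (∃ u : Lp ℂ 2 μ, (⇑u =ᵐ[μ] fun x : ℝ => ((x : ℂ))⁻¹) ∧ (U u : H) = f)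
      ∧ f ∈ closure ((Submodule.span ℂ (Set.range ψ)) : Set H) := by
  have hA : IsSelfAdjoint A := hsa
  have hgram : ∀ j k, ⟪ψ j, ψ k⟫_ℂ = ∫ x, (x : ℂ) ^ (j + k) ∂μ := fun j k => by
    rw [inner_orbit_eq_inner_zero_add hA.isFormalAdjoint hmem hstep, hψ0, hμ]
  have hR : ∀ᵐ x ∂μ, |x| ≤ |B| :=
    ae_abs_le_of_norm_orbit_le hgram (fun n => orbit_zero_eq_zero hmem hstep hinj) hbdd
  obtain ⟨U, hU⟩ := range_krylovMap (R := ℂ) ψ ▸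
    exists_linearIsometryEquiv_topologicalClosure_range
      (denseRange_polynomialToLp hR) (norm_krylovMap_eq_norm_polynomialToLp hR hgram)
  set T := ((Submodule.subtypeₗᵢ _).comp U.toLinearIsometry).toContinuousLinearMap
  obtain ⟨w, hw, hTw⟩ :=
    exists_ae_eq_inv_and_apply_eq hA hmem hstep hinj hR hgram T hU hf (hψ0 ▸ hAf)
  refine ⟨U, fun p u hu => ?_, ⟨w, hw, hTw⟩, ?_⟩
  · rw [Lp.ext (hu.trans (polynomialToLp_ae_eq hR p).symm), hU, krylovMap_apply]
  · rw [← Submodule.topologicalClosure_coe, ← hTw]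
    exact (U w).2

/-- If `A` is self-adjoint and `g` is a bounded vector for `A` (`‖Aⁿg‖ ≤ B^n`, orbit
`ψ k = Aᵏg`), and `μ` is the scalar spectral measure of `A` at `g` (characterised by
its moments `∫ λⁿ dμ = ⟪g, Aⁿg⟫`), then `h ↦ h(A)g` extends to a unitary isomorphism
`L²(ℝ, dμ) ≅ closure(K(A,g))` sending (the class of) a polynomial `p` to `p(A)g`.
If moreover `A` is injective and `f ∈ D(A)` solves `Af = g`, then `f` corresponds to
`h(λ) = 1/λ ∈ L²(ℝ, dμ)`; in particular `f ∈ closure(K(A,g))`. -/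
theorem stmt19 {H : Type*} [NormedAddCommGroup H] [InnerProductSpace ℂ H] [CompleteSpace H]
    (A : H →ₗ.[ℂ] H) (hdense : Dense (A.domain : Set H))
    (hsa : A.adjoint = A)
    (g : H) (ψ : ℕ → H) (hψ0 : ψ 0 = g)
    (hmem : ∀ k, ψ k ∈ A.domain)
    (hstep : ∀ k, A ⟨ψ k, hmem k⟩ = ψ (k + 1))
    (B : ℝ) (hB : 0 < B) (hbdd : ∀ n : ℕ, ‖ψ n‖ ≤ B ^ n)
    (μ : Measure ℝ) [IsFiniteMeasure μ]
    (hμ : ∀ n : ℕ, ∫ x : ℝ, (x : ℂ) ^ n ∂μ = (inner ℂ g (ψ n) : ℂ))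
    (hinj : ∀ (x : H) (hx : x ∈ A.domain), A ⟨x, hx⟩ = 0 → x = 0)
    (f : H) (hf : f ∈ A.domain) (hAf : A ⟨f, hf⟩ = g) :
    ∃ U : Lp ℂ 2 μ ≃ₗᵢ[ℂ] (Submodule.span ℂ (Set.range ψ)).topologicalClosure,
      (∀ (p : Polynomial ℂ) (u : Lp ℂ 2 μ),
          (⇑u =ᵐ[μ] fun x : ℝ => p.eval (x : ℂ)) →
          ((U u : H) = ∑ k ∈ Finset.range (p.natDegree + 1), p.coeff k • ψ k))
      ∧ (∃ u : Lp ℂ 2 μ, (⇑u =ᵐ[μ] fun x : ℝ => ((x : ℂ))⁻¹) ∧ (U u : H) = f)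
      ∧ f ∈ closure ((Submodule.span ℂ (Set.range ψ)) : Set H) :=
  stmt19_general A hsa g ψ hψ0 hmem hstep B hbdd μ hμ hinj f hf hAf
end
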